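/- arXiv:2406.10439 — 6 statements merged into one kernel-verified Lean document; each statement's English description precedes it below -/
import Mathlib

section
/- Let λ, ε ∈ ℝ and τ > 0. Suppose x : ℝ → ℝ is continuous on [0, 3τ], satisfies x'(t) = λ·x(t) for all t ∈ (0, 2τ), and satisfies x'(t) = λ·x(t) + ε·(x(t−2τ) − x(t−τ)) for all t ∈ (2τ, 3τ). Then x(3τ) = (e^{3λτ} + ε·τ·e^{λτ}·(1 − e^{λτ})) · x(0). -/
/-- A function with zero derivative on the interior of an interval, continuous on the
closed interval, is constant there. -/
lemma const_of_deriv_zero {f : ℝ → ℝ} {a b : ℝ} (hab : a ≤ b)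
    (hc : ContinuousOn f (Set.Icc a b))
    (hd : ∀ t ∈ Set.Ioo a b, HasDerivAt f 0 t) :
    ∀ s ∈ Set.Icc a b, f s = f a := by
  have hconv : Convex ℝ (Set.Icc a b) := convex_Icc a b
  have hint : interior (Set.Icc a b) = Set.Ioo a b := interior_Icc
  have hdiff : DifferentiableOn ℝ f (interior (Set.Icc a b)) := by
    rw [hint]; intro t ht; exact (hd t ht).differentiableAt.differentiableWithinAt
  have hmono : MonotoneOn f (Set.Icc a b) := by
    apply monotoneOn_of_deriv_nonneg hconv hc hdiff
    intro t ht; rw [hint] at ht; rw [(hd t ht).deriv]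
  have hanti : AntitoneOn f (Set.Icc a b) := by
    apply antitoneOn_of_deriv_nonpos hconv hc hdiff
    intro t ht; rw [hint] at ht; rw [(hd t ht).deriv]
  intro s hs
  have ha : a ∈ Set.Icc a b := ⟨le_refl a, hab⟩
  exact le_antisymm (hanti ha hs hs.1) (hmono ha hs hs.1)

/-- One-period solution map of the scalar two-delayed feedback control scheme. -/
theorem stmt0 (lam eps τ : ℝ) (hτ : 0 < τ) (x : ℝ → ℝ)
    (hx : ContinuousOn x (Set.Icc 0 (3*τ)))
    (hfree : ∀ t ∈ Set.Ioo (0:ℝ) (2*τ), HasDerivAt x (lam * x t) t)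
    (hctrl : ∀ t ∈ Set.Ioo (2*τ) (3*τ),
      HasDerivAt x (lam * x t + eps * (x (t - 2*τ) - x (t - τ))) t) :
    x (3*τ) =
      (Real.exp (3*lam*τ) + eps * τ * Real.exp (lam*τ) * (1 - Real.exp (lam*τ))) * x 0 := by
  set E := Real.exp (lam*τ) with hE
  have hEpos : 0 < E := Real.exp_pos _
  set x0 := x 0 with hx0
  have hce : Continuous (fun s : ℝ => Real.exp (-(lam * s))) :=
    Real.continuous_exp.comp ((continuous_const.mul continuous_id).neg)
  set v : ℝ → ℝ := fun t => x t * Real.exp (-(lam * t)) with hv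
  have hexp : ∀ t : ℝ, HasDerivAt (fun s => Real.exp (-(lam * s)))
      (Real.exp (-(lam * t)) * (-lam)) t := by
    intro t
    have h1 : HasDerivAt (fun s : ℝ => -(lam * s)) (-lam) t := by
      exact (((hasDerivAt_id t).const_mul lam).neg).congr_deriv (by simp)
    exact h1.exp
  -- v is constant on [0, 2τ]
  have hsub1 : Set.Icc (0:ℝ) (2*τ) ⊆ Set.Icc 0 (3*τ) := by
    apply Set.Icc_subset_Icc le_rfl; nlinarith
  have hvcont1 : ContinuousOn v (Set.Icc 0 (2*τ)) :=
    (hx.mono hsub1).mul hce.continuousOn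
  have hvd1 : ∀ t ∈ Set.Ioo (0:ℝ) (2*τ), HasDerivAt v 0 t := by
    intro t ht
    have := (hfree t ht).mul (hexp t)
    exact this.congr_deriv (by ring)
  have hvconst1 : ∀ s ∈ Set.Icc (0:ℝ) (2*τ), v s = v 0 :=
    const_of_deriv_zero (by nlinarith) hvcont1 hvd1
  have hv0 : v 0 = x0 := by simp [hv, hx0]
  have hxfree : ∀ s ∈ Set.Icc (0:ℝ) (2*τ), x s = Real.exp (lam * s) * x0 := by
    intro s hs
    have h := hvconst1 s hs
    rw [hv0] at h
    have h' : x s * Real.exp (-(lam * s)) = x0 := h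
    have h2 : x s * Real.exp (-(lam * s)) * Real.exp (lam * s)
        = x0 * Real.exp (lam * s) := by rw [h']
    rwa [mul_assoc, ← Real.exp_add, neg_add_cancel, Real.exp_zero, mul_one,
      mul_comm x0] at h2
  -- w t = v t - c t is constant on [2τ, 3τ]
  set c : ℝ := eps * x0 * (Real.exp (-(lam * (2*τ))) - Real.exp (-(lam * τ))) with hc
  set w : ℝ → ℝ := fun t => v t - c * t with hw
  have hsub2 : Set.Icc (2*τ) (3*τ) ⊆ Set.Icc 0 (3*τ) := by
    apply Set.Icc_subset_Icc _ le_rfl; nlinarith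
  have hwcont : ContinuousOn w (Set.Icc (2*τ) (3*τ)) := by
    apply ContinuousOn.sub
    · exact (hx.mono hsub2).mul hce.continuousOn
    · exact (continuous_const.mul continuous_id).continuousOn
  have hwd : ∀ t ∈ Set.Ioo (2*τ) (3*τ), HasDerivAt w 0 t := by
    intro t ht
    obtain ⟨ht1, ht2⟩ := ht
    have hm1 : t - 2*τ ∈ Set.Icc (0:ℝ) (2*τ) := by
      constructor <;> nlinarith
    have hm2 : t - τ ∈ Set.Icc (0:ℝ) (2*τ) := by
      constructor <;> nlinarith
    have hx1 : x (t - 2*τ) = Real.exp (lam * (t - 2*τ)) * x0 := hxfree _ hm1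
    have hx2 : x (t - τ) = Real.exp (lam * (t - τ)) * x0 := hxfree _ hm2
    have hxd := (hctrl t ⟨ht1, ht2⟩).mul (hexp t)
    have hcd : HasDerivAt (fun s : ℝ => c * s) c t := by
      simpa using (hasDerivAt_id t).const_mul c
    have := hxd.sub hcd
    refine this.congr_deriv ?_
    rw [hx1, hx2, hc]
    have e1 : Real.exp (lam * (t - 2*τ)) * Real.exp (-(lam * t))
        = Real.exp (-(lam * (2*τ))) := by
      rw [← Real.exp_add]; ring_nf
    have e2 : Real.exp (lam * (t - τ)) * Real.exp (-(lam * t))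
        = Real.exp (-(lam * τ)) := by
      rw [← Real.exp_add]; ring_nf
    have expand : (lam * x t + eps * (Real.exp (lam * (t - 2*τ)) * x0
          - Real.exp (lam * (t - τ)) * x0)) * Real.exp (-(lam * t))
          + x t * (Real.exp (-(lam * t)) * -lam) - eps * x0 *
          (Real.exp (-(lam * (2*τ))) - Real.exp (-(lam * τ)))
        = eps * x0 * ((Real.exp (lam * (t - 2*τ)) * Real.exp (-(lam * t))
            - Real.exp (-(lam * (2*τ))))
          - (Real.exp (lam * (t - τ)) * Real.exp (-(lam * t))
            - Real.exp (-(lam * τ)))) := by ring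
    rw [expand, e1, e2]
    ring
  have hwconst : ∀ s ∈ Set.Icc (2*τ) (3*τ), w s = w (2*τ) :=
    const_of_deriv_zero (by nlinarith) hwcont hwd
  have h3 : w (3*τ) = w (2*τ) := hwconst _ ⟨by nlinarith, le_rfl⟩
  have hv2 : v (2*τ) = x0 := by
    rw [hvconst1 (2*τ) ⟨by nlinarith, le_rfl⟩, hv0]
  have hv3 : v (3*τ) = x0 + c * τ := by
    have : v (3*τ) - c * (3*τ) = v (2*τ) - c * (2*τ) := h3
    rw [hv2] at this
    linarith
  -- unfold v (3τ)
  have hx3 : x (3*τ) = (x0 + c * τ) * Real.exp (lam * (3*τ)) := by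
    have h2 : x (3*τ) * Real.exp (-(lam * (3*τ))) * Real.exp (lam * (3*τ))
        = (x0 + c * τ) * Real.exp (lam * (3*τ)) := by
      rw [show x (3*τ) * Real.exp (-(lam * (3*τ))) = v (3*τ) from rfl, hv3]
    rwa [mul_assoc, ← Real.exp_add, neg_add_cancel, Real.exp_zero, mul_one] at h2
  rw [hx3, hc]
  have e3 : Real.exp (lam * (3*τ)) = E * E * E := by
    rw [hE, ← Real.exp_add, ← Real.exp_add]; ring_nf
  have e4 : Real.exp (3*lam*τ) = E * E * E := by
    rw [hE, ← Real.exp_add, ← Real.exp_add]; ring_nf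
  have e5 : Real.exp (-(lam * (2*τ))) = (E * E)⁻¹ := by
    rw [hE, ← Real.exp_add, ← Real.exp_neg]; ring_nf
  have e6 : Real.exp (-(lam * τ)) = E⁻¹ := by
    rw [hE, ← Real.exp_neg]
  rw [e3, e4, e5, e6]
  field_simp
end

section
/- Let λ, ε ∈ ℂ and τ > 0. Suppose z : ℝ → ℂ is continuous on [0, 3τ], satisfies z'(t) = λ·z(t) for all t ∈ (0, 2τ), and satisfies z'(t) = λ·z(t) + ε·(z(t−2τ) − z(t−τ)) for all t ∈ (2τ, 3τ). Then z(3τ) = (e^{3λτ} + ε·τ·e^{λτ}·(1 − e^{λτ})) · z(0). -/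
open Set Filter Topology

private lemma expDerivAux (c : ℂ) (t : ℝ) :
    HasDerivAt (fun s : ℝ => Complex.exp (c * s)) (c * Complex.exp (c * t)) t := by
  have h : HasDerivAt (fun s : ℝ => c * (s : ℂ)) c t := by
    simpa using (HasDerivAt.ofReal_comp (hasDerivAt_id t)).const_mul c
  simpa [mul_comm] using h.cexp

private lemma constOfDerivZero {f : ℝ → ℂ} {a b : ℝ} (hab : a < b)
    (hcont : ContinuousOn f (Icc a b))
    (hderiv : ∀ x ∈ Ioo a b, HasDerivAt f 0 x) : f b = f a := by
  have key : ∀ c ∈ Ioo a b, f b = f c := by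
    intro c hc
    have hcont' : ContinuousOn f (Icc c b) := hcont.mono (Icc_subset_Icc hc.1.le le_rfl)
    have hd : ∀ x ∈ Ico c b, HasDerivWithinAt f 0 (Ici x) x := fun x hx =>
      (hderiv x ⟨lt_of_lt_of_le hc.1 hx.1, hx.2⟩).hasDerivWithinAt
    exact constant_of_has_deriv_right_zero hcont' hd b ⟨hc.2.le, le_rfl⟩
  have h1 : Tendsto f (𝓝[Ioo a b] a) (𝓝 (f a)) :=
    (hcont.continuousWithinAt ⟨le_rfl, hab.le⟩).mono Ioo_subset_Icc_self
  have h2 : Tendsto f (𝓝[Ioo a b] a) (𝓝 (f b)) := by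
    refine Tendsto.congr' ?_ tendsto_const_nhds
    filter_upwards [self_mem_nhdsWithin] with x hx
    exact key x hx
  haveI := left_nhdsWithin_Ioo_neBot hab
  exact tendsto_nhds_unique h2 h1

private lemma constIccOfDerivZero {f : ℝ → ℂ} {a b : ℝ}
    (hcont : ContinuousOn f (Icc a b))
    (hderiv : ∀ x ∈ Ioo a b, HasDerivAt f 0 x) :
    ∀ x ∈ Icc a b, f x = f a := by
  intro x hx
  rcases eq_or_lt_of_le hx.1 with h | h
  · rw [← h]
  · exact constOfDerivZero h (hcont.mono (Icc_subset_Icc le_rfl hx.2))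
      (fun y hy => hderiv y ⟨hy.1, lt_of_lt_of_le hy.2 hx.2⟩)

/-- Complex-scalar one-period solution map of the TDFC scheme. -/
theorem stmt3 (lam eps : ℂ) (τ : ℝ) (hτ : 0 < τ) (z : ℝ → ℂ)
    (hz : ContinuousOn z (Set.Icc 0 (3*τ)))
    (hfree : ∀ t ∈ Set.Ioo (0:ℝ) (2*τ), HasDerivAt z (lam * z t) t)
    (hctrl : ∀ t ∈ Set.Ioo (2*τ) (3*τ),
      HasDerivAt z (lam * z t + eps * (z (t - 2*τ) - z (t - τ))) t) :
    z (3*τ) =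
      (Complex.exp (3*lam*(τ:ℂ)) + eps * (τ:ℂ) * Complex.exp (lam*(τ:ℂ)) *
        (1 - Complex.exp (lam*(τ:ℂ)))) * z 0 := by
  have hexp : ∀ t : ℝ, HasDerivAt (fun s : ℝ => Complex.exp (-lam * s))
      (-lam * Complex.exp (-lam * t)) t := fun t => expDerivAux (-lam) t
  -- Step A: on [0, 2τ], z t = exp(lam t) z 0
  have stepA : ∀ t ∈ Icc (0:ℝ) (2*τ), z t = Complex.exp (lam * t) * z 0 := by
    set g : ℝ → ℂ := fun t => Complex.exp (-lam * t) * z t with hg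
    have hgc : ContinuousOn g (Icc 0 (2*τ)) := by
      apply ContinuousOn.mul
      · exact (Complex.continuous_exp.comp (by continuity)).continuousOn
      · exact hz.mono (Icc_subset_Icc le_rfl (by nlinarith))
    have hgd : ∀ t ∈ Ioo (0:ℝ) (2*τ), HasDerivAt g 0 t := by
      intro t ht
      have := (hexp t).mul (hfree t ht)
      refine this.congr_deriv (Eq.symm ?_)
      ring
    have hconst := constIccOfDerivZero hgc hgd
    intro t ht
    have h1 := hconst t ht
    simp only [hg] at h1
    have h0 : Complex.exp (-lam * (0:ℝ)) = 1 := by norm_num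
    rw [h0, one_mul] at h1
    have : Complex.exp (lam * t) * (Complex.exp (-lam * t) * z t)
        = Complex.exp (lam * t) * z 0 := by rw [h1]
    rwa [← mul_assoc, ← Complex.exp_add, show lam * (t:ℂ) + -lam * t = 0 by ring,
      Complex.exp_zero, one_mul] at this
  -- Step B
  set c : ℂ := eps * z 0 * (Complex.exp (-(2*lam)*(τ:ℂ)) - Complex.exp (-lam*(τ:ℂ))) with hc
  set u : ℝ → ℂ := fun t => Complex.exp (-lam * t) * z t - c * t with hu
  have huc : ContinuousOn u (Icc (2*τ) (3*τ)) := by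
    apply ContinuousOn.sub
    · exact ((Complex.continuous_exp.comp (by continuity)).continuousOn).mul
        (hz.mono (Icc_subset_Icc (by nlinarith) le_rfl))
    · exact (continuous_const.mul (Complex.continuous_ofReal)).continuousOn
  have hud : ∀ t ∈ Ioo (2*τ) (3*τ), HasDerivAt u 0 t := by
    intro t ht
    have hz2 : z (t - 2*τ) = Complex.exp (lam * ((t:ℂ) - 2*τ)) * z 0 := by
      have := stepA (t - 2*τ) ⟨by linarith [ht.1], by linarith [ht.2]⟩
      rw [this]; push_cast; ring_nf
    have hz1 : z (t - τ) = Complex.exp (lam * ((t:ℂ) - τ)) * z 0 := by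
      have := stepA (t - τ) ⟨by linarith [ht.1], by linarith [ht.2]⟩
      rw [this]; push_cast; ring_nf
    have hlin : HasDerivAt (fun s : ℝ => c * (s:ℂ)) c t := by
      simpa using (HasDerivAt.ofReal_comp (hasDerivAt_id t)).const_mul c
    have hmain := ((hexp t).mul (hctrl t ht)).sub hlin
    refine hmain.congr_deriv (Eq.symm ?_)
    rw [hz2, hz1, hc]
    have e1 : Complex.exp (-lam * t) * Complex.exp (lam * ((t:ℂ) - 2*τ))
        = Complex.exp (-(2*lam)*(τ:ℂ)) := by rw [← Complex.exp_add]; ring_nf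
    have e2 : Complex.exp (-lam * t) * Complex.exp (lam * ((t:ℂ) - τ))
        = Complex.exp (-lam*(τ:ℂ)) := by rw [← Complex.exp_add]; ring_nf
    have : Complex.exp (-lam * ↑t) *
        (eps * (Complex.exp (lam * ((t:ℂ) - 2*τ)) * z 0 - Complex.exp (lam * ((t:ℂ) - τ)) * z 0))
        = eps * z 0 * (Complex.exp (-(2*lam)*(τ:ℂ)) - Complex.exp (-lam*(τ:ℂ))) := by
      rw [← e1, ← e2]; ring
    linear_combination -this
  have hle : (2*τ) < 3*τ := by nlinarith
  have hkey := constOfDerivZero hle huc hud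
  simp only [hu] at hkey
  have hz2τ : z (2*τ) = Complex.exp (lam * (2*(τ:ℂ))) * z 0 := by
    have := stepA (2*τ) ⟨by nlinarith, le_rfl⟩
    rw [this]; push_cast; ring_nf
  rw [hz2τ, hc] at hkey
  push_cast at hkey
  set E := Complex.exp (lam*(τ:ℂ)) with hE
  have f1 : Complex.exp (3*lam*(τ:ℂ)) * Complex.exp (-lam * (3*(τ:ℂ))) = 1 := by
    rw [← Complex.exp_add, show 3*lam*(τ:ℂ) + -lam * (3*(τ:ℂ)) = 0 by ring, Complex.exp_zero]
  have f2 : Complex.exp (-lam * (2*(τ:ℂ))) * Complex.exp (lam * (2*(τ:ℂ))) = 1 := by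
    rw [← Complex.exp_add, show -lam * (2*(τ:ℂ)) + lam * (2*(τ:ℂ)) = 0 by ring, Complex.exp_zero]
  have f3 : Complex.exp (3*lam*(τ:ℂ)) * Complex.exp (-(2*lam)*(τ:ℂ)) = E := by
    rw [hE, ← Complex.exp_add]
    exact congrArg Complex.exp (by ring)
  have f4 : Complex.exp (3*lam*(τ:ℂ)) * Complex.exp (-lam*(τ:ℂ)) = E * E := by
    rw [hE, ← Complex.exp_add, ← Complex.exp_add]
    exact congrArg Complex.exp (by ring)
  linear_combination Complex.exp (3*lam*(τ:ℂ)) * hkey - z (3*τ) * f1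
    + Complex.exp (3*lam*(τ:ℂ)) * z 0 * f2 + eps * (τ:ℂ) * z 0 * f3 - eps * (τ:ℂ) * z 0 * f4
end

section
/- Let τ > 0, μ > 0, ω ∈ ℝ, λ = μ + iω, 0 ≤ ρ < 1, θ ∈ ℝ, and ε = e^{−λτ}·(e^{3λτ} − ρ·e^{iθ}) / (τ·(e^{λτ} − 1)) ∈ ℂ. Then, with d = τ·e^{μτ}·(1 − 2·e^{μτ}·cos(ωτ) + e^{2μτ}), the real part of ε equals (ρ·cos(θ−ωτ) − ρ·e^{μτ}·cos(θ−2ωτ) − e^{3μτ}·cos(2ωτ) + e^{4μτ}·cos(ωτ)) / d, and the imaginary part of ε equals (ρ·sin(θ−ωτ) − ρ·e^{μτ}·sin(θ−2ωτ) − e^{3μτ}·sin(2ωτ) + e^{4μτ}·sin(ωτ)) / d. -/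
/-- Explicit real formulas (13) for the real and imaginary parts of the complex gain ε. -/
theorem stmt5 (τ μ ω ρ θ : ℝ) (hτ : 0 < τ) (hμ : 0 < μ) (hρ0 : 0 ≤ ρ) (hρ1 : ρ < 1)
    (lam eps : ℂ) (hlam : lam = (μ:ℂ) + (ω:ℂ)*Complex.I)
    (heps : eps = Complex.exp (-(lam*(τ:ℂ))) *
      (Complex.exp (3*lam*(τ:ℂ)) - (ρ:ℂ)*Complex.exp ((θ:ℂ)*Complex.I)) /
      ((τ:ℂ)*(Complex.exp (lam*(τ:ℂ)) - 1)))
    (d : ℝ)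
    (hd : d = τ * Real.exp (μ*τ) * (1 - 2*Real.exp (μ*τ)*Real.cos (ω*τ) + Real.exp (2*μ*τ))) :
    eps.re = (ρ*Real.cos (θ - ω*τ) - ρ*Real.exp (μ*τ)*Real.cos (θ - 2*ω*τ)
        - Real.exp (3*μ*τ)*Real.cos (2*ω*τ) + Real.exp (4*μ*τ)*Real.cos (ω*τ)) / d ∧
    eps.im = (ρ*Real.sin (θ - ω*τ) - ρ*Real.exp (μ*τ)*Real.sin (θ - 2*ω*τ)
        - Real.exp (3*μ*τ)*Real.sin (2*ω*τ) + Real.exp (4*μ*τ)*Real.sin (ω*τ)) / d := by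
  set E := Real.exp (μ*τ) with hE
  set c := Real.cos (ω*τ) with hc
  set s := Real.sin (ω*τ) with hs
  set u : ℂ := (c:ℂ) + (s:ℂ)*Complex.I with hu
  set v : ℂ := (c:ℂ) - (s:ℂ)*Complex.I with hv
  set q : ℂ := (Real.cos θ : ℂ) + (Real.sin θ : ℂ)*Complex.I with hq
  have hscR : s^2 + c^2 = 1 := Real.sin_sq_add_cos_sq (ω*τ)
  have hscC : (s:ℂ)^2 + (c:ℂ)^2 = 1 := by exact_mod_cast congrArg (Complex.ofReal) hscR
  have huv : u * v = 1 := by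
    rw [hu, hv]; linear_combination hscC - (s:ℂ)^2 * Complex.I_sq
  have hz : Complex.exp (lam*(τ:ℂ)) = (E:ℂ) * u := by
    rw [hlam, show ((μ:ℂ) + (ω:ℂ)*Complex.I)*(τ:ℂ) = ((μ*τ:ℝ):ℂ) + ((ω*τ:ℝ):ℂ)*Complex.I by
      push_cast; ring, Complex.exp_add, Complex.exp_mul_I]
    rw [hu, hE, hc, hs]
    push_cast [Complex.ofReal_cos, Complex.ofReal_sin]
    ring
  have h3 : Complex.exp (3*lam*(τ:ℂ)) = ((E:ℂ)*u)^3 := by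
    rw [show (3:ℂ)*lam*(τ:ℂ) = lam*(τ:ℂ) + (lam*(τ:ℂ) + lam*(τ:ℂ)) by ring,
      Complex.exp_add, Complex.exp_add, hz]; ring
  have hqe : Complex.exp ((θ:ℂ)*Complex.I) = q := by
    rw [Complex.exp_mul_I, hq]
    push_cast [Complex.ofReal_cos, Complex.ofReal_sin]
    ring
  have hm : Complex.exp (-(lam*(τ:ℂ))) * ((E:ℂ)*u) = 1 := by
    rw [← hz, ← Complex.exp_add]; simp
  have hE1 : 1 < E := by
    rw [hE]; nlinarith [Real.add_one_le_exp (μ*τ), mul_pos hμ hτ]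
  have hEpos : (0:ℝ) < E := lt_trans one_pos hE1
  have hdpos : 0 < d := by
    have hc1 : c ≤ 1 := Real.cos_le_one _
    rw [hd, show Real.exp (2*μ*τ) = E^2 by rw [hE, show 2*μ*τ = μ*τ + μ*τ by ring, Real.exp_add]; ring]
    have : 0 < 1 - 2*E*c + E^2 := by nlinarith [sq_nonneg (E - 1)]
    positivity
  have hden : Complex.exp (lam*(τ:ℂ)) - 1 ≠ 0 := by
    intro h
    have h2 : Complex.exp (lam*(τ:ℂ)) = 1 := by linear_combination h
    have h3' := congrArg (fun z : ℂ => ‖z‖) h2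
    have hre : (lam*(τ:ℂ)).re = μ*τ := by rw [hlam]; simp
    rw [Complex.norm_exp, hre, norm_one] at h3'
    nlinarith [Real.add_one_le_exp (μ*τ), mul_pos hμ hτ, h3']
  have hτC : (τ:ℂ) ≠ 0 := by exact_mod_cast hτ.ne'
  have key : eps * ((τ:ℂ)*(Complex.exp (lam*(τ:ℂ)) - 1)) =
      Complex.exp (-(lam*(τ:ℂ))) * (Complex.exp (3*lam*(τ:ℂ)) - (ρ:ℂ)*Complex.exp ((θ:ℂ)*Complex.I)) := by
    rw [heps]; field_simp
  rw [hz, h3, hqe] at key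
  have hE2 : Real.exp (2*μ*τ) = E^2 := by
    rw [hE, show 2*μ*τ = μ*τ + μ*τ by ring, Real.exp_add]; ring
  have hE3 : Real.exp (3*μ*τ) = E^3 := by
    rw [hE, show 3*μ*τ = μ*τ + (μ*τ + μ*τ) by ring, Real.exp_add, Real.exp_add]; ring
  have hE4 : Real.exp (4*μ*τ) = E^4 := by
    rw [hE, show 4*μ*τ = μ*τ + (μ*τ + (μ*τ + μ*τ)) by ring, Real.exp_add, Real.exp_add,
      Real.exp_add]; ring
  have hdC : (d:ℂ) = (τ:ℂ)*(E:ℂ)*(1 - 2*(E:ℂ)*(c:ℂ) + (E:ℂ)^2) := by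
    rw [hd, hE2]; push_cast; ring
  have hc2 : u + v = 2*(c:ℂ) := by rw [hu, hv]; ring
  have hX : Complex.exp (-(lam*(τ:ℂ))) * (E:ℂ) = v := by
    calc Complex.exp (-(lam*(τ:ℂ))) * (E:ℂ)
        = (Complex.exp (-(lam*(τ:ℂ))) * ((E:ℂ)*u)) * v
          - Complex.exp (-(lam*(τ:ℂ))) * (E:ℂ) * (u*v - 1) := by ring
      _ = v := by rw [hm, huv]; ring
  have step1 : eps * ((τ:ℂ)*((E:ℂ)*u-1)) * ((E:ℂ)*((E:ℂ)*v-1))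
      = ((E:ℂ)*v-1)*v*(((E:ℂ)*u)^3 - (ρ:ℂ)*q) := by
    rw [key]
    linear_combination (((E:ℂ)*v-1)*(((E:ℂ)*u)^3 - (ρ:ℂ)*q)) * hX
  have step2 : eps * (d:ℂ) = eps * ((τ:ℂ)*((E:ℂ)*u-1)) * ((E:ℂ)*((E:ℂ)*v-1))
      - eps*(τ:ℂ)*(E:ℂ)^3*(u*v-1) + eps*(τ:ℂ)*(E:ℂ)^2*((u+v) - 2*(c:ℂ)) := by
    linear_combination eps * hdC
  have hmain : eps * (d:ℂ) = (ρ:ℂ)*q*v - (ρ:ℂ)*(E:ℂ)*q*v^2 - (E:ℂ)^3*u^2 + (E:ℂ)^4*u := by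
    rw [step2, step1]
    linear_combination ((E:ℂ)^4*u*(u*v+1) - (E:ℂ)^3*u^2 - eps*(τ:ℂ)*(E:ℂ)^3) * huv
      + (eps*(τ:ℂ)*(E:ℂ)^2) * hc2
  set A : ℝ := ρ*(Real.cos θ*c + Real.sin θ*s)
    - ρ*E*(Real.cos θ*(c*c-s*s) + Real.sin θ*(s*c+c*s))
    - E^3*(c*c-s*s) + E^4*c with hA
  set B : ℝ := ρ*(Real.sin θ*c - Real.cos θ*s)
    - ρ*E*(Real.sin θ*(c*c-s*s) - Real.cos θ*(s*c+c*s))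
    - E^3*(s*c+c*s) + E^4*s with hB
  have hnum : (ρ:ℂ)*q*v - (ρ:ℂ)*(E:ℂ)*q*v^2 - (E:ℂ)^3*u^2 + (E:ℂ)^4*u
      = ((A:ℝ):ℂ) + ((B:ℝ):ℂ)*Complex.I := by
    rw [hu, hv, hq, hA, hB]
    apply Complex.ext <;>
      simp only [sq, Complex.add_re, Complex.sub_re, Complex.mul_re, Complex.mul_im,
        Complex.add_im, Complex.sub_im, Complex.ofReal_re, Complex.ofReal_im,
        Complex.I_re, Complex.I_im, ← Complex.ofReal_pow, Complex.ofReal_re, Complex.ofReal_im] <;>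
      push_cast <;> ring
  rw [hnum] at hmain
  have hd0 : (d:ℂ) ≠ 0 := by exact_mod_cast hdpos.ne'
  have heq : eps = (((A/d : ℝ)):ℂ) + (((B/d : ℝ)):ℂ)*Complex.I := by
    have : eps = (((A:ℝ):ℂ) + ((B:ℝ):ℂ)*Complex.I) / (d:ℂ) := by
      rw [eq_div_iff hd0]; exact hmain
    rw [this]; push_cast; field_simp
  rw [heq]
  constructor
  · simp only [Complex.add_re, Complex.ofReal_re, Complex.mul_re, Complex.I_re,
      Complex.ofReal_im, Complex.I_im]
    rw [Real.cos_sub, Real.cos_sub, show (2:ℝ)*ω*τ = ω*τ + ω*τ by ring,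
      Real.cos_add, Real.sin_add, hE3, hE4, hA]
    rw [← hc, ← hs]
    ring
  · simp only [Complex.add_im, Complex.ofReal_im, Complex.mul_im, Complex.I_im,
      Complex.ofReal_re, Complex.I_re]
    rw [Real.sin_sub, Real.sin_sub, show (2:ℝ)*ω*τ = ω*τ + ω*τ by ring,
      Real.cos_add, Real.sin_add, hE3, hE4, hB]
    rw [← hc, ← hs]
    ring
end

section
/- Let λ, ε ∈ ℝ and τ > 0. There exists b ∈ ℝ, depending only on λ, ε and τ, such that: for every pair of continuous functions x₁, x₂ : [0, 3τ] → ℝ satisfying on (0, 2τ) the equations x₁'(t) = λ·x₁(t) + x₂(t) and x₂'(t) = λ·x₂(t), and on (2τ, 3τ) the equations x₁'(t) = λ·x₁(t) + x₂(t) + ε·(x₁(t−2τ) − x₁(t−τ)) and x₂'(t) = λ·x₂(t) + ε·(x₂(t−2τ) − x₂(t−τ)), one has x₂(3τ) = a·x₂(0) and x₁(3τ) = a·x₁(0) + b·x₂(0), where a = e^{3λτ} + ε·τ·e^{λτ}·(1 − e^{λτ}). -/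
open Set Filter Real Topology

lemma constIoo {φ : ℝ → ℝ} {a b : ℝ} (hab : a < b)
    (hc : ContinuousOn φ (Set.Icc a b))
    (hd : ∀ t ∈ Set.Ioo a b, HasDerivAt φ 0 t) : φ b = φ a := by
  have hne : (𝓝[Set.Ioo a b] a).NeBot := left_nhdsWithin_Ioo_neBot hab
  have hIoo : ∀ s ∈ Set.Ioo a b, φ b = φ s := by
    intro s hs
    exact constant_of_has_deriv_right_zero
      (hc.mono (Set.Icc_subset_Icc hs.1.le le_rfl))
      (fun x hx => (hd x ⟨hs.1.trans_le hx.1, hx.2⟩).hasDerivWithinAt)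
      b ⟨hs.2.le, le_rfl⟩
  have h1 : Filter.Tendsto φ (𝓝[Set.Ioo a b] a) (𝓝 (φ a)) :=
    (hc a ⟨le_rfl, hab.le⟩).mono_left (nhdsWithin_mono _ Set.Ioo_subset_Icc_self)
  have h2 : Filter.Tendsto φ (𝓝[Set.Ioo a b] a) (𝓝 (φ b)) := by
    refine Filter.Tendsto.congr' ?_ tendsto_const_nhds
    filter_upwards [self_mem_nhdsWithin] with s hs
    exact hIoo s hs
  exact tendsto_nhds_unique h2 h1

lemma key {x r R : ℝ → ℝ} {lam a b : ℝ} (hab : a < b)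
    (hx : ContinuousOn x (Set.Icc a b))
    (hR : ∀ t, HasDerivAt R (Real.exp (-(lam*t)) * r t) t)
    (hd : ∀ t ∈ Set.Ioo a b, HasDerivAt x (lam * x t + r t) t) :
    x b = Real.exp (lam*(b-a)) * x a + Real.exp (lam*b) * (R b - R a) := by
  set φ : ℝ → ℝ := fun t => Real.exp (-(lam*t)) * x t - R t with hφ
  have hexp : ∀ t : ℝ, HasDerivAt (fun t => Real.exp (-(lam*t)))
      (-lam * Real.exp (-(lam*t))) t := by
    intro t
    have h1 : HasDerivAt (fun t : ℝ => -(lam*t)) (-lam) t := by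
      convert (config := {preTransparency := .default}) ((hasDerivAt_id t).const_mul lam).neg using 1; ring
    convert (config := {preTransparency := .default}) (Real.hasDerivAt_exp (-(lam*t))).comp t h1 using 1; ring
  have hcφ : ContinuousOn φ (Set.Icc a b) := by
    apply ContinuousOn.sub
    · exact (Real.continuous_exp.comp (by continuity)).continuousOn.mul hx
    · exact fun t _ => ((hR t).continuousAt).continuousWithinAt
  have hdφ : ∀ t ∈ Set.Ioo a b, HasDerivAt φ 0 t := by
    intro t ht
    have := ((hexp t).mul (hd t ht)).sub (hR t)
    convert (config := {preTransparency := .default}) this using 1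
    ring
  have hc := constIoo hab hcφ hdφ
  simp only [hφ] at hc
  have e1 : Real.exp (lam*b) * Real.exp (-(lam*b)) = 1 := by
    rw [← Real.exp_add]; ring_nf; exact Real.exp_zero
  have e2 : Real.exp (lam*b) * Real.exp (-(lam*a)) = Real.exp (lam*(b-a)) := by
    rw [← Real.exp_add]; ring_nf
  calc x b = Real.exp (lam*b) * Real.exp (-(lam*b)) * x b := by rw [e1]; ring
    _ = Real.exp (lam*b) * (Real.exp (-(lam*a)) * x a - R a + R b) := by
        rw [mul_assoc]
        congr 1
        linarith [hc]
    _ = _ := by rw [← e2]; ring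

lemma hsq (k t : ℝ) : HasDerivAt (fun s => (s-k)^2/2) (t-k) t := by
  have h := (((hasDerivAt_id t).sub_const k).pow 2).div_const 2
  convert (config := {preTransparency := .default}) h using 1
  norm_num

/-- One-period map for the 2×2 Jordan block case is upper triangular with
diagonal equal to the scalar multiplier. -/
theorem stmt7 (lam eps τ : ℝ) (hτ : 0 < τ) :
    ∃ b : ℝ, ∀ x1 x2 : ℝ → ℝ,
      ContinuousOn x1 (Set.Icc 0 (3*τ)) →
      ContinuousOn x2 (Set.Icc 0 (3*τ)) →
      (∀ t ∈ Set.Ioo (0:ℝ) (2*τ), HasDerivAt x1 (lam * x1 t + x2 t) t) →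
      (∀ t ∈ Set.Ioo (0:ℝ) (2*τ), HasDerivAt x2 (lam * x2 t) t) →
      (∀ t ∈ Set.Ioo (2*τ) (3*τ),
        HasDerivAt x1 (lam * x1 t + x2 t + eps * (x1 (t - 2*τ) - x1 (t - τ))) t) →
      (∀ t ∈ Set.Ioo (2*τ) (3*τ),
        HasDerivAt x2 (lam * x2 t + eps * (x2 (t - 2*τ) - x2 (t - τ))) t) →
      x2 (3*τ) =
        (Real.exp (3*lam*τ) + eps*τ*Real.exp (lam*τ)*(1 - Real.exp (lam*τ))) * x2 0 ∧
      x1 (3*τ) =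
        (Real.exp (3*lam*τ) + eps*τ*Real.exp (lam*τ)*(1 - Real.exp (lam*τ))) * x1 0
          + b * x2 0 := by
  set E1 := Real.exp (-(lam*τ)) with hE1def
  set E2 := Real.exp (-(lam*(2*τ))) with hE2def
  set c : ℝ := eps*(E2 - E1) with hcdef
  set g : ℝ → ℝ := fun s => s + c*(s-2*τ)^2/2 + eps*(E2*(s-2*τ)^2/2 - E1*(s-τ)^2/2) with hgdef
  refine ⟨Real.exp (lam*τ) * Real.exp (lam*(2*τ)) * (2*τ)
      + Real.exp (lam*(3*τ)) * (g (3*τ) - g (2*τ)), ?_⟩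
  intro x1 x2 hc1 hc2 hd1 hd2 hd1' hd2'
  have h23 : 2*τ < 3*τ := by linarith
  have h03 : (0:ℝ) ≤ 3*τ := by linarith
  -- exp facts
  set u := Real.exp (lam*τ) with hudef
  have hu0 : u ≠ 0 := Real.exp_ne_zero _
  have hu2 : Real.exp (lam*(2*τ)) = u^2 := by
    rw [show lam*(2*τ) = lam*τ + lam*τ by ring, Real.exp_add]; ring
  have hu3 : Real.exp (lam*(3*τ)) = u^3 := by
    rw [show lam*(3*τ) = lam*τ + (lam*τ + lam*τ) by ring, Real.exp_add, Real.exp_add]; ring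
  have hu3' : Real.exp (3*lam*τ) = u^3 := by
    rw [show 3*lam*τ = lam*(3*τ) by ring]; exact hu3
  have hnu : E1 = u⁻¹ := by rw [hE1def, Real.exp_neg]
  have hnu2 : E2 = (u^2)⁻¹ := by rw [hE2def, Real.exp_neg, hu2]
  -- phase 1 for x2
  have hx2 : ∀ t ∈ Set.Icc (0:ℝ) (2*τ), x2 t = Real.exp (lam*t) * x2 0 := by
    intro t ht
    rcases eq_or_lt_of_le ht.1 with h | h
    · rw [← h]; simp
    · have hkey := key (x := x2) (r := fun _ => (0:ℝ)) (R := fun _ => (0:ℝ)) (lam := lam) h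
        (hc2.mono (Set.Icc_subset_Icc le_rfl (by linarith [ht.2])))
        (fun s => by simpa using hasDerivAt_const s (0:ℝ))
        (fun s hs => by simpa using hd2 s ⟨hs.1, hs.2.trans_le ht.2⟩)
      simpa using hkey
  -- phase 1 for x1
  have hx1 : ∀ t ∈ Set.Icc (0:ℝ) (2*τ), x1 t = Real.exp (lam*t) * (x1 0 + t * x2 0) := by
    intro t ht
    rcases eq_or_lt_of_le ht.1 with h | h
    · rw [← h]; simp
    · have hR : ∀ s : ℝ, HasDerivAt (fun s => s * x2 0)
          (Real.exp (-(lam*s)) * (Real.exp (lam*s) * x2 0)) s := by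
        intro s
        have h2 := (hasDerivAt_id s).mul_const (x2 0)
        have h1 : Real.exp (-(lam*s)) * Real.exp (lam*s) = 1 := by
          rw [← Real.exp_add]; ring_nf; exact Real.exp_zero
        convert (config := {preTransparency := .default}) h2 using 1
        rw [← mul_assoc, h1]
      have hkey := key (x := x1) (r := fun s => Real.exp (lam*s) * x2 0)
        (R := fun s => s * x2 0) (lam := lam) h
        (hc1.mono (Set.Icc_subset_Icc le_rfl (by linarith [ht.2])))
        hR
        (fun s hs => by
          have hmem : s ∈ Set.Icc (0:ℝ) (2*τ) := ⟨hs.1.le, (hs.2.trans_le ht.2).le⟩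
          have h := hd1 s ⟨hs.1, hs.2.trans_le ht.2⟩
          rw [hx2 s hmem] at h
          exact h)
      rw [hkey]
      simp only [sub_zero, zero_mul]
      ring
  -- phase 2 for x2
  have hx2b : ∀ t ∈ Set.Icc (2*τ) (3*τ),
      x2 t = Real.exp (lam*t) * (1 + c*(t-2*τ)) * x2 0 := by
    intro t ht
    rcases eq_or_lt_of_le ht.1 with h | h
    · rw [← h, hx2 (2*τ) ⟨by linarith, le_rfl⟩]; ring
    · have hR : ∀ s : ℝ, HasDerivAt (fun s => c * x2 0 * s)
          (Real.exp (-(lam*s)) * (eps*(Real.exp (lam*(s-2*τ)) - Real.exp (lam*(s-τ))) * x2 0)) s := by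
        intro s
        have h2 := (hasDerivAt_id s).const_mul (c * x2 0)
        convert (config := {preTransparency := .default}) h2 using 1
        rw [hcdef, hE1def, hE2def,
          show lam*(s-2*τ) = lam*s - lam*(2*τ) by ring,
          show lam*(s-τ) = lam*s - lam*τ by ring]
        simp only [Real.exp_sub, Real.exp_neg]
        field_simp
      have hkey := key (x := x2)
        (r := fun s => eps*(Real.exp (lam*(s-2*τ)) - Real.exp (lam*(s-τ))) * x2 0)
        (R := fun s => c * x2 0 * s) (lam := lam) h
        (hc2.mono (Set.Icc_subset_Icc (by linarith) (by linarith [ht.2])))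
        hR
        (fun s hs => by
          have hs3 : s < 3*τ := hs.2.trans_le ht.2
          have h1 : s - 2*τ ∈ Set.Icc (0:ℝ) (2*τ) :=
            ⟨by linarith [hs.1], by linarith⟩
          have h2 : s - τ ∈ Set.Icc (0:ℝ) (2*τ) :=
            ⟨by linarith [hs.1], by linarith⟩
          have h := hd2' s ⟨hs.1, hs3⟩
          rw [hx2 _ h1, hx2 _ h2] at h
          convert (config := {preTransparency := .default}) h using 1
          ring)
      rw [hkey, hx2 (2*τ) ⟨by linarith, le_rfl⟩]
      have hE : Real.exp (lam*(t-2*τ)) * Real.exp (lam*(2*τ)) = Real.exp (lam*t) := by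
        rw [← Real.exp_add]; ring_nf
      linear_combination x2 0 * hE
  -- phase 2 for x1 at endpoint
  have hRfull : ∀ s : ℝ, HasDerivAt
      (fun s => x2 0*(s + c*(s-2*τ)^2/2)
        + eps*(E2*(x1 0*s + (s-2*τ)^2/2*x2 0) - E1*(x1 0*s + (s-τ)^2/2*x2 0)))
      (Real.exp (-(lam*s)) *
        (Real.exp (lam*s)*(1 + c*(s-2*τ))*x2 0
          + eps*(Real.exp (lam*(s-2*τ))*(x1 0 + (s-2*τ)*x2 0)
            - Real.exp (lam*(s-τ))*(x1 0 + (s-τ)*x2 0)))) s := by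
    intro s
    have ha1 := ((hasDerivAt_id s).add ((hsq (2*τ) s).const_mul c)).const_mul (x2 0)
    have ha2 := (((hasDerivAt_id s).const_mul (x1 0)).add ((hsq (2*τ) s).mul_const (x2 0))).const_mul E2
    have ha3 := (((hasDerivAt_id s).const_mul (x1 0)).add ((hsq τ s).mul_const (x2 0))).const_mul E1
    have h := ha1.add ((ha2.sub ha3).const_mul eps)
    convert (config := {preTransparency := .default}) h using 1
    · funext y; simp only [id_eq, Pi.add_apply, Pi.sub_apply]; ring
    · rw [hcdef, hE1def, hE2def,
        show lam*(s-2*τ) = lam*s - lam*(2*τ) by ring,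
        show lam*(s-τ) = lam*s - lam*τ by ring]
      simp only [Real.exp_sub, Real.exp_neg]
      field_simp
  have hkey1 := key (x := x1)
    (r := fun s => Real.exp (lam*s)*(1 + c*(s-2*τ))*x2 0
      + eps*(Real.exp (lam*(s-2*τ))*(x1 0 + (s-2*τ)*x2 0)
        - Real.exp (lam*(s-τ))*(x1 0 + (s-τ)*x2 0)))
    (R := fun s => x2 0*(s + c*(s-2*τ)^2/2)
      + eps*(E2*(x1 0*s + (s-2*τ)^2/2*x2 0) - E1*(x1 0*s + (s-τ)^2/2*x2 0)))
    (lam := lam) h23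
    (hc1.mono (Set.Icc_subset_Icc (by linarith) le_rfl))
    hRfull
    (fun s hs => by
      have h1 : s - 2*τ ∈ Set.Icc (0:ℝ) (2*τ) := ⟨by linarith [hs.1], by linarith [hs.2]⟩
      have h2 : s - τ ∈ Set.Icc (0:ℝ) (2*τ) := ⟨by linarith [hs.1], by linarith [hs.2]⟩
      have h3 : s ∈ Set.Icc (2*τ) (3*τ) := ⟨hs.1.le, hs.2.le⟩
      have h := hd1' s hs
      rw [hx1 _ h1, hx1 _ h2, hx2b _ h3] at h
      convert (config := {preTransparency := .default}) h using 1
      ring)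
  constructor
  · rw [hx2b (3*τ) ⟨h23.le, le_rfl⟩, hu3, hu3', hcdef, hnu, hnu2]
    field_simp
    ring
  · rw [hkey1, hx1 (2*τ) ⟨by linarith, le_rfl⟩,
      show lam*(3*τ-2*τ) = lam*τ by ring]
    rw [hgdef]
    simp only []
    rw [hu3, hu3', hu2, hcdef, hnu, hnu2]
    field_simp
    ring
end

section
/- Let n ≥ 1, τ > 0, and let λ₁, …, λₙ ∈ ℝ be all nonzero. For each i with λᵢ > 0 fix ζᵢ ∈ ℝ with |ζᵢ| < 1 and set εᵢ = e^{−λᵢτ}·(e^{3λᵢτ} − ζᵢ) / (τ·(e^{λᵢτ} − 1)); for each i with λᵢ < 0 set εᵢ = 0. Define kᵢ(t) = 0 for t ∈ [3kτ, (3k+2)τ) and kᵢ(t) = εᵢ for t ∈ [(3k+2)τ, (3k+3)τ), k ∈ ℕ. Suppose y : [0, ∞) → ℝⁿ is continuous and its components satisfy yᵢ'(t) = λᵢ·yᵢ(t) + kᵢ(t)·(yᵢ(t−2τ) − yᵢ(t−τ)) for all t > 0 and all i. Then y(t) → 0 as t → ∞. -/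
lemma myconst {f : ℝ → ℝ} {a b : ℝ} (hab : a < b)
    (hc : ContinuousOn f (Set.Icc a b))
    (hd : ∀ x ∈ Set.Ioo a b, HasDerivAt f 0 x) :
    ∀ x ∈ Set.Icc a b, f x = f b := by
  have h1 : ∀ x ∈ Set.Ioc a b, f x = f b := by
    intro x hx
    have hsub : Set.Icc x b ⊆ Set.Icc a b := Set.Icc_subset_Icc hx.1.le le_rfl
    have h := constant_of_has_deriv_right_zero (f := f) (a := x) (b := b)
      (hc.mono hsub)
      (fun z hz => (hd z ⟨lt_of_lt_of_le hx.1 hz.1, hz.2⟩).hasDerivWithinAt)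
    exact (h b (Set.right_mem_Icc.2 hx.2)).symm
  have h2 : f a = f b := by
    have hco : ContinuousWithinAt f (Set.Icc a b) a :=
      hc a (Set.left_mem_Icc.2 hab.le)
    have hmem : Set.Ioc a b ∈ nhdsWithin a (Set.Ioi a) :=
      Ioc_mem_nhdsGT_of_mem ⟨le_rfl, hab⟩
    have hle : nhdsWithin a (Set.Ioi a) ≤ nhdsWithin a (Set.Icc a b) :=
      nhdsWithin_le_of_mem (Filter.mem_of_superset hmem Set.Ioc_subset_Icc_self)
    have ht1 : Filter.Tendsto f (nhdsWithin a (Set.Ioi a)) (nhds (f a)) :=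
      hco.tendsto.mono_left hle
    have ht2 : Filter.Tendsto f (nhdsWithin a (Set.Ioi a)) (nhds (f b)) := by
      refine Filter.Tendsto.congr' ?_ tendsto_const_nhds
      filter_upwards [hmem] with x hx
      exact (h1 x hx).symm
    exact tendsto_nhds_unique ht1 ht2
  intro x hx
  rcases eq_or_lt_of_le hx.1 with h | h
  · rw [← h]; exact h2
  · exact h1 x ⟨h, hx.2⟩

set_option maxHeartbeats 1000000 in
theorem scalar_key (τ : ℝ) (hτ : 0 < τ) (L E : ℝ)
    (hμ : |Real.exp (3*L*τ) + E * (Real.exp (L*τ) - Real.exp (2*L*τ)) * τ| < 1)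
    (kf : ℝ → ℝ)
    (hk0 : ∀ (k : ℕ) (t : ℝ), 3*(k:ℝ)*τ ≤ t → t < (3*(k:ℝ)+2)*τ → kf t = 0)
    (hk1 : ∀ (k : ℕ) (t : ℝ), (3*(k:ℝ)+2)*τ ≤ t → t < (3*(k:ℝ)+3)*τ → kf t = E)
    (u : ℝ → ℝ) (hu : ContinuousOn u (Set.Ici 0))
    (hode : ∀ t : ℝ, 0 < t →
      HasDerivAt u (L * u t + kf t * (u (t - 2*τ) - u (t - τ))) t) :
    Filter.Tendsto u Filter.atTop (nhds 0) := by
  set μ : ℝ := Real.exp (3*L*τ) + E * (Real.exp (L*τ) - Real.exp (2*L*τ)) * τ with hμdef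
  -- derivative of exp(-L s)
  have hexp : ∀ t : ℝ, HasDerivAt (fun s : ℝ => Real.exp (-L*s)) (-L * Real.exp (-L*t)) t := by
    intro t
    have h := (HasDerivAt.const_mul (-L) (hasDerivAt_id t)).exp
    simp only [id_eq, mul_one] at h
    convert h using 1
    ring
  -- Claim A : on free intervals u is exponential (expressed from the right endpoint)
  have claimA : ∀ (k : ℕ) (t : ℝ), t ∈ Set.Icc (3*(k:ℝ)*τ) ((3*(k:ℝ)+2)*τ) →
      u t = Real.exp (L*(t - (3*(k:ℝ)+2)*τ)) * u ((3*(k:ℝ)+2)*τ) := by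
    intro k t ht
    have hk0' : (0:ℝ) ≤ 3*(k:ℝ)*τ := by positivity
    have hlt : 3*(k:ℝ)*τ < (3*(k:ℝ)+2)*τ := by nlinarith
    have hgc : ContinuousOn (fun s : ℝ => Real.exp (-L*s) * u s)
        (Set.Icc (3*(k:ℝ)*τ) ((3*(k:ℝ)+2)*τ)) := by
      apply ContinuousOn.mul
      · exact (Real.continuous_exp.comp (continuous_const.mul continuous_id)).continuousOn
      · exact hu.mono (fun x hx => Set.mem_Ici.2 (le_trans hk0' hx.1))
    have hgd : ∀ x ∈ Set.Ioo (3*(k:ℝ)*τ) ((3*(k:ℝ)+2)*τ),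
        HasDerivAt (fun s : ℝ => Real.exp (-L*s) * u s) 0 x := by
      intro x hx
      have hx0 : 0 < x := lt_of_le_of_lt hk0' hx.1
      have hkf : kf x = 0 := hk0 k x hx.1.le hx.2
      have hyd : HasDerivAt u (L * u x) x := by
        have h := hode x hx0
        rw [hkf] at h
        simpa using h
      have h2 := (hexp x).mul hyd
      refine h2.congr_deriv (Eq.symm ?_)
      ring
    have hcon := myconst hlt hgc hgd t ht
    have hX : Real.exp (L*t) * Real.exp (-L*t) = 1 := by
      rw [← Real.exp_add, show L*t + -L*t = (0:ℝ) by ring, Real.exp_zero]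
    have hY : Real.exp (L*(t - (3*(k:ℝ)+2)*τ))
        = Real.exp (L*t) * Real.exp (-L*((3*(k:ℝ)+2)*τ)) := by
      rw [← Real.exp_add]; congr 1; ring
    rw [hY]
    calc u t = Real.exp (L*t) * Real.exp (-L*t) * u t := by rw [hX]; ring
    _ = Real.exp (L*t) * (Real.exp (-L*t) * u t) := by ring
    _ = Real.exp (L*t) * (Real.exp (-L*((3*(k:ℝ)+2)*τ)) * u ((3*(k:ℝ)+2)*τ)) := by rw [hcon]
    _ = Real.exp (L*t) * Real.exp (-L*((3*(k:ℝ)+2)*τ)) * u ((3*(k:ℝ)+2)*τ) := by ring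
  -- Claim B : on the acting intervals
  have claimB : ∀ (k : ℕ) (t : ℝ), t ∈ Set.Icc ((3*(k:ℝ)+2)*τ) ((3*(k:ℝ)+3)*τ) →
      u t = Real.exp (L*(t - (3*(k:ℝ)+2)*τ)) * u ((3*(k:ℝ)+2)*τ)
        + E * u ((3*(k:ℝ)+2)*τ)
          * (Real.exp (L*(t - 2*τ - (3*(k:ℝ)+2)*τ)) - Real.exp (L*(t - τ - (3*(k:ℝ)+2)*τ)))
          * (t - (3*(k:ℝ)+2)*τ) := by
    intro k t ht
    have hk0' : (0:ℝ) ≤ 3*(k:ℝ)*τ := by positivity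
    have hT2pos : (0:ℝ) < (3*(k:ℝ)+2)*τ := by nlinarith
    have hlt : (3*(k:ℝ)+2)*τ < (3*(k:ℝ)+3)*τ := by nlinarith
    set c : ℝ := E * u ((3*(k:ℝ)+2)*τ)
        * (Real.exp (-L*(2*τ + (3*(k:ℝ)+2)*τ)) - Real.exp (-L*(τ + (3*(k:ℝ)+2)*τ))) with hc
    have hgc : ContinuousOn (fun s : ℝ => Real.exp (-L*s) * u s - c * s)
        (Set.Icc ((3*(k:ℝ)+2)*τ) ((3*(k:ℝ)+3)*τ)) := by
      apply ContinuousOn.sub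
      · apply ContinuousOn.mul
        · exact (Real.continuous_exp.comp (continuous_const.mul continuous_id)).continuousOn
        · exact hu.mono (fun x hx => Set.mem_Ici.2 (le_trans hT2pos.le hx.1))
      · exact (continuous_const.mul continuous_id).continuousOn
    have hgd : ∀ x ∈ Set.Ioo ((3*(k:ℝ)+2)*τ) ((3*(k:ℝ)+3)*τ),
        HasDerivAt (fun s : ℝ => Real.exp (-L*s) * u s - c * s) 0 x := by
      intro x hx
      have hx0 : 0 < x := lt_trans hT2pos hx.1
      have hkf : kf x = E := hk1 k x hx.1.le hx.2
      have hm2 : x - 2*τ ∈ Set.Icc (3*(k:ℝ)*τ) ((3*(k:ℝ)+2)*τ) := by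
        constructor
        · nlinarith [hx.1]
        · nlinarith [hx.2]
      have hm1 : x - τ ∈ Set.Icc (3*(k:ℝ)*τ) ((3*(k:ℝ)+2)*τ) := by
        constructor
        · nlinarith [hx.1]
        · nlinarith [hx.2]
      have hyd := hode x hx0
      rw [hkf, claimA k (x - 2*τ) hm2, claimA k (x - τ) hm1] at hyd
      have h2 := ((hexp x).mul hyd).sub (HasDerivAt.const_mul c (hasDerivAt_id x))
      refine h2.congr_deriv (Eq.symm ?_)
      have hX : Real.exp (-L*x) * Real.exp (L*x) = 1 := by
        rw [← Real.exp_add, show -L*x + L*x = (0:ℝ) by ring, Real.exp_zero]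
      have E1 : Real.exp (L*(x - 2*τ - (3*(k:ℝ)+2)*τ))
          = Real.exp (L*x) * Real.exp (-L*(2*τ + (3*(k:ℝ)+2)*τ)) := by
        rw [← Real.exp_add]; congr 1; ring
      have E2 : Real.exp (L*(x - τ - (3*(k:ℝ)+2)*τ))
          = Real.exp (L*x) * Real.exp (-L*(τ + (3*(k:ℝ)+2)*τ)) := by
        rw [← Real.exp_add]; congr 1; ring
      rw [hc, E1, E2]
      simp only [id_eq, mul_one]
      linear_combination (-(E * u ((3*(k:ℝ)+2)*τ)
        * (Real.exp (-L*(2*τ + (3*(k:ℝ)+2)*τ)) - Real.exp (-L*(τ + (3*(k:ℝ)+2)*τ))))) * hX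
    have hcon := myconst hlt hgc hgd t ht
    have hconL := myconst hlt hgc hgd ((3*(k:ℝ)+2)*τ) (Set.left_mem_Icc.2 hlt.le)
    have hg : Real.exp (-L*t) * u t - c * t
        = Real.exp (-L*((3*(k:ℝ)+2)*τ)) * u ((3*(k:ℝ)+2)*τ) - c * ((3*(k:ℝ)+2)*τ) := by
      rw [hcon, ← hconL]
    have hX : Real.exp (L*t) * Real.exp (-L*t) = 1 := by
      rw [← Real.exp_add, show L*t + -L*t = (0:ℝ) by ring, Real.exp_zero]
    have E0 : Real.exp (L*(t - (3*(k:ℝ)+2)*τ))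
        = Real.exp (L*t) * Real.exp (-L*((3*(k:ℝ)+2)*τ)) := by
      rw [← Real.exp_add]; congr 1; ring
    have E1 : Real.exp (L*(t - 2*τ - (3*(k:ℝ)+2)*τ))
        = Real.exp (L*t) * Real.exp (-L*(2*τ + (3*(k:ℝ)+2)*τ)) := by
      rw [← Real.exp_add]; congr 1; ring
    have E2 : Real.exp (L*(t - τ - (3*(k:ℝ)+2)*τ))
        = Real.exp (L*t) * Real.exp (-L*(τ + (3*(k:ℝ)+2)*τ)) := by
      rw [← Real.exp_add]; congr 1; ring
    rw [E0, E1, E2, hc] at *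
    linear_combination Real.exp (L*t) * hg - (u t) * hX
  -- recursion for b k := u ((3k+2)τ)
  set b : ℕ → ℝ := fun k => u ((3*(k:ℝ)+2)*τ) with hb
  have hrec : ∀ k : ℕ, b (k+1) = μ * b k := by
    intro k
    have hT3mem : (3*(k:ℝ)+3)*τ ∈ Set.Icc (3*((k+1:ℕ):ℝ)*τ) ((3*((k+1:ℕ):ℝ)+2)*τ) := by
      constructor
      · push_cast; nlinarith
      · push_cast; nlinarith
    have hA := claimA (k+1) _ hT3mem
    have hBmem : (3*(k:ℝ)+3)*τ ∈ Set.Icc ((3*(k:ℝ)+2)*τ) ((3*(k:ℝ)+3)*τ) := by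
      constructor
      · nlinarith
      · exact le_rfl
    have hB := claimB k _ hBmem
    have e0 : Real.exp (L*(2*τ))
        * Real.exp (L*((3*(k:ℝ)+3)*τ - (3*((k+1:ℕ):ℝ)+2)*τ)) = 1 := by
      rw [← Real.exp_add, ← Real.exp_zero]
      congr 1
      push_cast
      ring
    have h1 : b (k+1) = Real.exp (L*(2*τ)) * u ((3*(k:ℝ)+3)*τ) := by
      have hbk1 : b (k+1) = u ((3*((k+1:ℕ):ℝ)+2)*τ) := rfl
      rw [hbk1, hA, ← mul_assoc, e0, one_mul]
    rw [hB] at h1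
    have e1 : Real.exp (L*((3*(k:ℝ)+3)*τ - (3*(k:ℝ)+2)*τ)) = Real.exp (L*τ) := by
      congr 1; ring
    have e2 : Real.exp (L*((3*(k:ℝ)+3)*τ - 2*τ - (3*(k:ℝ)+2)*τ)) = Real.exp (-(L*τ)) := by
      congr 1; ring
    have e3 : Real.exp (L*((3*(k:ℝ)+3)*τ - τ - (3*(k:ℝ)+2)*τ)) = Real.exp 0 := by
      congr 1; ring
    rw [e1, e2, e3] at h1
    have f1 : Real.exp (L*(2*τ)) * Real.exp (L*τ) = Real.exp (3*L*τ) := by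
      rw [← Real.exp_add]; congr 1; ring
    have f2 : Real.exp (L*(2*τ)) * Real.exp (-(L*τ)) = Real.exp (L*τ) := by
      rw [← Real.exp_add]; congr 1; ring
    have f3 : Real.exp (L*(2*τ)) * Real.exp (0:ℝ) = Real.exp (2*L*τ) := by
      rw [← Real.exp_add]; congr 1; ring
    rw [hμdef]
    linear_combination h1 + b k * f1 + E * b k * τ * f2 - E * b k * τ * f3
  have hbpow : ∀ k : ℕ, b k = μ^k * b 0 := by
    intro k
    induction k with
    | zero => simp
    | succ m ih => rw [hrec m, ih, pow_succ]; ring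
  -- uniform bound over each period
  have hM : ∀ s : ℝ, |s| ≤ 3*τ → Real.exp (L*s) ≤ Real.exp (3*|L| *τ) := by
    intro s hs
    apply Real.exp_le_exp.2
    calc L*s ≤ |L*s| := le_abs_self _
    _ = |L| *|s| := abs_mul _ _
    _ ≤ |L| *(3*τ) := mul_le_mul_of_nonneg_left hs (abs_nonneg _)
    _ = 3*|L| *τ := by ring
  set C : ℝ := Real.exp (3*|L| *τ) * (1 + 2*|E| *τ) with hC
  have hbd : ∀ (k : ℕ) (t : ℝ), t ∈ Set.Icc (3*(k:ℝ)*τ) ((3*(k:ℝ)+3)*τ) →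
      |u t| ≤ C * |b k| := by
    intro k t ht
    obtain ⟨htl, htr⟩ := ht
    have hEτ : 0 ≤ |E| * τ := mul_nonneg (abs_nonneg _) hτ.le
    have hMpos := Real.exp_pos (3*|L| *τ)
    by_cases hcase : t ≤ (3*(k:ℝ)+2)*τ
    · have hmem : t ∈ Set.Icc (3*(k:ℝ)*τ) ((3*(k:ℝ)+2)*τ) := ⟨htl, hcase⟩
      have hA := claimA k t hmem
      have harg : |t - (3*(k:ℝ)+2)*τ| ≤ 3*τ := by
        rw [abs_le]
        constructor
        · nlinarith
        · nlinarith
      have hle := hM _ harg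
      rw [hA, abs_mul, abs_of_pos (Real.exp_pos _)]
      have hbnn : (0:ℝ) ≤ |u ((3*(k:ℝ)+2)*τ)| := abs_nonneg _
      have hb0 : |b k| = |u ((3*(k:ℝ)+2)*τ)| := rfl
      rw [hb0]
      calc Real.exp (L*(t - (3*(k:ℝ)+2)*τ)) * |u ((3*(k:ℝ)+2)*τ)|
          ≤ Real.exp (3*|L| * τ) * |u ((3*(k:ℝ)+2)*τ)| :=
            mul_le_mul_of_nonneg_right hle hbnn
      _ ≤ C * |u ((3*(k:ℝ)+2)*τ)| := by
          rw [hC]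
          nlinarith [mul_nonneg (mul_nonneg hMpos.le hEτ) hbnn]
    · push_neg at hcase
      have hmem : t ∈ Set.Icc ((3*(k:ℝ)+2)*τ) ((3*(k:ℝ)+3)*τ) := ⟨hcase.le, htr⟩
      have hB := claimB k t hmem
      have h0 : |t - (3*(k:ℝ)+2)*τ| ≤ 3*τ := by
        rw [abs_le]; constructor
        · nlinarith
        · nlinarith
      have h1 : |t - 2*τ - (3*(k:ℝ)+2)*τ| ≤ 3*τ := by
        rw [abs_le]; constructor
        · nlinarith
        · nlinarith
      have h2 : |t - τ - (3*(k:ℝ)+2)*τ| ≤ 3*τ := by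
        rw [abs_le]; constructor
        · nlinarith
        · nlinarith
      have hm0 := hM _ h0
      have hm1 := hM _ h1
      have hm2 := hM _ h2
      have hdiff : |Real.exp (L*(t - 2*τ - (3*(k:ℝ)+2)*τ))
          - Real.exp (L*(t - τ - (3*(k:ℝ)+2)*τ))| ≤ 2*Real.exp (3*|L| *τ) := by
        rw [abs_le]
        constructor
        · nlinarith [Real.exp_pos (L*(t - 2*τ - (3*(k:ℝ)+2)*τ)),
            Real.exp_pos (L*(t - τ - (3*(k:ℝ)+2)*τ))]
        · nlinarith [Real.exp_pos (L*(t - 2*τ - (3*(k:ℝ)+2)*τ)),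
            Real.exp_pos (L*(t - τ - (3*(k:ℝ)+2)*τ))]
      have hfac : |t - (3*(k:ℝ)+2)*τ| ≤ τ := by
        rw [abs_le]; constructor
        · nlinarith
        · nlinarith
      have hb0 : |b k| = |u ((3*(k:ℝ)+2)*τ)| := rfl
      rw [hB, hb0]
      calc |Real.exp (L*(t - (3*(k:ℝ)+2)*τ)) * u ((3*(k:ℝ)+2)*τ)
          + E * u ((3*(k:ℝ)+2)*τ)
            * (Real.exp (L*(t - 2*τ - (3*(k:ℝ)+2)*τ)) - Real.exp (L*(t - τ - (3*(k:ℝ)+2)*τ)))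
            * (t - (3*(k:ℝ)+2)*τ)|
          ≤ |Real.exp (L*(t - (3*(k:ℝ)+2)*τ)) * u ((3*(k:ℝ)+2)*τ)|
          + |E * u ((3*(k:ℝ)+2)*τ)
            * (Real.exp (L*(t - 2*τ - (3*(k:ℝ)+2)*τ)) - Real.exp (L*(t - τ - (3*(k:ℝ)+2)*τ)))
            * (t - (3*(k:ℝ)+2)*τ)| := abs_add_le _ _
      _ ≤ Real.exp (3*|L| *τ) * |u ((3*(k:ℝ)+2)*τ)|
          + |E| * |u ((3*(k:ℝ)+2)*τ)| * (2*Real.exp (3*|L| *τ)) * τ := by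
          apply add_le_add
          · rw [abs_mul, abs_of_pos (Real.exp_pos _)]
            exact mul_le_mul_of_nonneg_right hm0 (abs_nonneg _)
          · rw [abs_mul, abs_mul, abs_mul]
            apply mul_le_mul
            · apply mul_le_mul_of_nonneg_left hdiff
              positivity
            · exact hfac
            · exact abs_nonneg _
            · positivity
      _ = C * |u ((3*(k:ℝ)+2)*τ)| := by rw [hC]; ring
  -- final limit
  have hC0 : (0:ℝ) ≤ C := by positivity
  rw [Metric.tendsto_atTop]
  intro ε hε
  have hseq : Filter.Tendsto (fun j : ℕ => C * |μ|^j * |b 0|) Filter.atTop (nhds 0) := by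
    have h := tendsto_pow_atTop_nhds_zero_of_lt_one (abs_nonneg μ) hμ
    have h2 := (h.const_mul C).mul_const |b 0|
    simpa using h2
  obtain ⟨K, hK⟩ := (hseq.eventually (gt_mem_nhds hε)).exists
  refine ⟨3*(K:ℝ)*τ, fun t ht => ?_⟩
  have hKτ : (0:ℝ) ≤ 3*(K:ℝ)*τ := by positivity
  have ht0 : (0:ℝ) ≤ t := le_trans hKτ ht
  have h3τ : (0:ℝ) < 3*τ := by linarith
  set k : ℕ := ⌊t/(3*τ)⌋₊ with hk
  have hkK : K ≤ k := by
    apply Nat.le_floor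
    rw [le_div_iff₀ h3τ]
    nlinarith
  have hlow : 3*(k:ℝ)*τ ≤ t := by
    have h := Nat.floor_le (div_nonneg ht0 h3τ.le)
    have h2 := (le_div_iff₀ h3τ).1 h
    nlinarith
  have hhigh : t ≤ (3*(k:ℝ)+3)*τ := by
    have h := Nat.lt_floor_add_one (t/(3*τ))
    have h2 := (div_lt_iff₀ h3τ).1 h
    nlinarith
  have hbdk := hbd k t ⟨hlow, hhigh⟩
  rw [Real.dist_eq, sub_zero]
  have hmono : |μ|^k ≤ |μ|^K := pow_le_pow_of_le_one (abs_nonneg μ) hμ.le hkK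
  calc |u t| ≤ C * |b k| := hbdk
  _ = C * |μ|^k * |b 0| := by rw [hbpow k, abs_mul, abs_pow]; ring
  _ ≤ C * |μ|^K * |b 0| := by
      apply mul_le_mul_of_nonneg_right _ (abs_nonneg _)
      exact mul_le_mul_of_nonneg_left hmono hC0
  _ < ε := hK


/-- n-dimensional stabilization in the diagonal case with all real nonzero eigenvalues. -/
theorem stmt9 (n : ℕ) (hn : 1 ≤ n) (τ : ℝ) (hτ : 0 < τ)
    (lam ζ eps : Fin n → ℝ) (hlam : ∀ i, lam i ≠ 0)
    (hζ : ∀ i, 0 < lam i → |ζ i| < 1)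
    (hepsPos : ∀ i, 0 < lam i →
      eps i = Real.exp (-(lam i * τ)) * (Real.exp (3*lam i*τ) - ζ i) /
        (τ * (Real.exp (lam i * τ) - 1)))
    (hepsNeg : ∀ i, lam i < 0 → eps i = 0)
    (kfun : Fin n → ℝ → ℝ)
    (hk0 : ∀ (i : Fin n) (k : ℕ) (t : ℝ),
      3*(k:ℝ)*τ ≤ t → t < (3*(k:ℝ)+2)*τ → kfun i t = 0)
    (hk1 : ∀ (i : Fin n) (k : ℕ) (t : ℝ),
      (3*(k:ℝ)+2)*τ ≤ t → t < (3*(k:ℝ)+3)*τ → kfun i t = eps i)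
    (y : ℝ → Fin n → ℝ) (hy : ContinuousOn y (Set.Ici 0))
    (hode : ∀ t : ℝ, 0 < t → ∀ i : Fin n,
      HasDerivAt (fun s => y s i)
        (lam i * y t i + kfun i t * (y (t - 2*τ) i - y (t - τ) i)) t) :
    Filter.Tendsto y Filter.atTop (nhds 0) := by
  rw [tendsto_pi_nhds]
  intro i
  have hμ : |Real.exp (3*lam i*τ) + eps i * (Real.exp (lam i*τ) - Real.exp (2*lam i*τ)) * τ| < 1 := by
    rcases (hlam i).lt_or_gt with hneg | hpos
    · rw [hepsNeg i hneg]
      have he : Real.exp (3*lam i*τ) + 0 * (Real.exp (lam i*τ) - Real.exp (2*lam i*τ)) * τ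
          = Real.exp (3*lam i*τ) := by ring
      rw [he, abs_of_pos (Real.exp_pos _)]
      exact Real.exp_lt_one_iff.2 (by nlinarith)
    · have hE := hepsPos i hpos
      have hx3 : Real.exp (3*lam i*τ)
          = Real.exp (lam i*τ) * Real.exp (lam i*τ) * Real.exp (lam i*τ) := by
        rw [← Real.exp_add, ← Real.exp_add]; congr 1; ring
      have hx2 : Real.exp (2*lam i*τ) = Real.exp (lam i*τ) * Real.exp (lam i*τ) := by
        rw [← Real.exp_add]; congr 1; ring
      have hX1 : 1 < Real.exp (lam i*τ) := Real.one_lt_exp_iff.2 (by positivity)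
      have hXne : Real.exp (lam i*τ) ≠ 0 := (Real.exp_pos _).ne'
      have hX1ne : Real.exp (lam i*τ) - 1 ≠ 0 := sub_ne_zero.2 (ne_of_gt hX1)
      have hmain : Real.exp (3*lam i*τ)
          + eps i * (Real.exp (lam i*τ) - Real.exp (2*lam i*τ)) * τ = ζ i := by
        rw [hE, Real.exp_neg, hx3, hx2]
        field_simp
        ring
      rw [hmain]
      exact hζ i hpos
  exact scalar_key τ hτ (lam i) (eps i) hμ (kfun i) (hk0 i) (hk1 i)
    (fun s => y s i) ((continuous_apply i).comp_continuousOn hy)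
    (fun t ht => hode t ht i)
end

section
/- Let τ > 0 and let D ∈ ℝ^{n×n} be block diagonal, composed of 1×1 blocks (λᵢ) with λᵢ ∈ ℝ, λᵢ ≠ 0, and 2×2 blocks [[μⱼ, −ωⱼ], [ωⱼ, μⱼ]] with μⱼ ≠ 0. Define the block-diagonal matrix K̃ with, in the position of each 1×1 block, the entry 0 if λᵢ < 0 and otherwise εᵢ = e^{−λᵢτ}·(e^{3λᵢτ} − ζᵢ)/(τ·(e^{λᵢτ} − 1)) for some fixed |ζᵢ| < 1; and, in the position of each 2×2 block, the zero 2×2 matrix if μⱼ < 0 and otherwise the matrix [[εⱼ₁, −εⱼ₂], [εⱼ₂, εⱼ₁]] where εⱼ₁ + i·εⱼ₂ = e^{−λⱼτ}·(e^{3λⱼτ} − ρⱼe^{iθⱼ})/(τ·(e^{λⱼτ} − 1)) with λⱼ = μⱼ + iωⱼ and some fixed 0 ≤ ρⱼ < 1, θⱼ ∈ ℝ. Define K̃(t) = 0 for t ∈ [3kτ, (3k+2)τ) and K̃(t) = K̃ for t ∈ [(3k+2)τ, (3k+3)τ), k ∈ ℕ. Then every continuous y : [0, ∞) → ℝⁿ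 satisfying y'(t) = D·y(t) + K̃(t)·(y(t−2τ) − y(t−τ)) for all t > 0 converges to 0 as t → ∞. -/
open Set Filter Complex

lemma constOn {w : ℝ → ℂ} {a b : ℝ} (hab : a ≤ b) (hc : ContinuousOn w (Set.Icc a b))
    (hd : ∀ t ∈ Set.Ioo a b, HasDerivAt w 0 t) : w b = w a := by
  rcases eq_or_lt_of_le hab with h | h
  · rw [h]
  · have key : ∀ (L : ℂ →L[ℝ] ℝ), L (w b) = L (w a) := by
      intro L
      obtain ⟨c, hcm, h0⟩ := exists_hasDerivAt_eq_slope (fun t => L (w t)) (fun _ => 0) h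
        (L.continuous.comp_continuousOn hc)
        (fun x hx => by have h := L.hasFDerivAt.comp_hasDerivAt x (hd x hx); rw [map_zero] at h; exact h)
      have h0' : ((L (w b) - L (w a)) / (b - a) : ℝ) = 0 := by simpa using h0.symm
      have := (div_eq_zero_iff.mp h0').resolve_right (sub_ne_zero.mpr h.ne')
      linarith
    have h1 := key Complex.reCLM
    have h2 := key Complex.imCLM
    simp only [Complex.reCLM_apply, Complex.imCLM_apply] at h1 h2
    exact Complex.ext h1 h2

lemma keyLemma (τ : ℝ) (hτ : 0 < τ) (lam eps sig : ℂ)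
    (hsig : sig = Complex.exp (3*lam*τ) -
      eps*τ*Complex.exp (lam*τ)*(Complex.exp (lam*τ) - 1))
    (hsig1 : ‖sig‖ < 1)
    (z : ℝ → ℂ) (hz : ContinuousOn z (Set.Ici 0))
    (hd0 : ∀ (k : ℕ) (t : ℝ), 3*(k:ℝ)*τ < t → t < (3*(k:ℝ)+2)*τ →
      HasDerivAt z (lam * z t) t)
    (hd1 : ∀ (k : ℕ) (t : ℝ), (3*(k:ℝ)+2)*τ < t → t < (3*(k:ℝ)+3)*τ →
      HasDerivAt z (lam * z t + eps * (z (t - 2*τ) - z (t - τ))) t) :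
    Filter.Tendsto z Filter.atTop (nhds 0) := by
  -- Step A: free evolution
  have hA : ∀ (k : ℕ) (t : ℝ), 3*(k:ℝ)*τ ≤ t → t ≤ (3*(k:ℝ)+2)*τ →
      z t = Complex.exp (lam * ((t - 3*(k:ℝ)*τ : ℝ) : ℂ)) * z (3*(k:ℝ)*τ) := by
    intro k t h1 h2
    set a : ℝ := 3*(k:ℝ)*τ with ha
    have ha0 : 0 ≤ a := by positivity
    set w : ℝ → ℂ := fun s => Complex.exp (-(lam * ((s - a : ℝ) : ℂ))) * z s with hw
    have hwd : ∀ s ∈ Set.Ioo a t, HasDerivAt w 0 s := by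
      intro s hs
      have hzd : HasDerivAt z (lam * z s) s :=
        hd0 k s hs.1 (lt_of_lt_of_le hs.2 h2)
      have hE : HasDerivAt (fun s : ℝ => Complex.exp (-(lam * ((s - a : ℝ) : ℂ))))
          (Complex.exp (-(lam * ((s - a : ℝ) : ℂ))) * (-lam)) s := by
        have h1' : HasDerivAt (fun s : ℝ => ((s - a : ℝ) : ℂ)) 1 s := by
          simpa using ((hasDerivAt_id s).sub_const a).ofReal_comp
        have := ((h1'.const_mul lam).neg).cexp
        simpa [mul_comm] using this
      have := hE.mul hzd
      refine this.congr_deriv (Eq.symm ?_)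
      ring
    have hwc : ContinuousOn w (Set.Icc a t) := by
      apply ContinuousOn.mul
      · exact (Complex.continuous_exp.comp (by fun_prop)).continuousOn
      · exact hz.mono (fun x hx => le_trans ha0 hx.1)
    have := constOn h1 hwc hwd
    rw [hw] at this
    simp only [sub_self, Complex.ofReal_zero, mul_zero, neg_zero, Complex.exp_zero,
      one_mul] at this
    rw [← this, ← mul_assoc, ← Complex.exp_add]
    simp
  -- Step B: active interval
  have hB : ∀ (k : ℕ) (t : ℝ), (3*(k:ℝ)+2)*τ ≤ t → t ≤ (3*(k:ℝ)+3)*τ →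
      z t = Complex.exp (lam * ((t - 3*(k:ℝ)*τ : ℝ) : ℂ)) *
        (z (3*(k:ℝ)*τ) + eps * ((t - 3*(k:ℝ)*τ - 2*τ : ℝ) : ℂ) *
          (Complex.exp (-(lam * ((2*τ : ℝ) : ℂ))) - Complex.exp (-(lam * ((τ : ℝ) : ℂ)))) *
          z (3*(k:ℝ)*τ)) := by
    intro k t h1 h2
    set C2 : ℂ := Complex.exp (-(lam * ((2*τ : ℝ) : ℂ))) with hC2
    set C1 : ℂ := Complex.exp (-(lam * ((τ : ℝ) : ℂ))) with hC1
    set a : ℝ := 3*(k:ℝ)*τ with ha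
    have ha0 : 0 ≤ a := by positivity
    have e1 : (3*(k:ℝ)+2)*τ = a + 2*τ := by ring
    have e2 : (3*(k:ℝ)+3)*τ = a + 3*τ := by ring
    rw [e1] at h1
    rw [e2] at h2
    set w : ℝ → ℂ := fun s => Complex.exp (-(lam * ((s - a : ℝ) : ℂ))) * z s
      - eps * ((s - a - 2*τ : ℝ) : ℂ) * (C2 - C1) * z a with hw
    have hwd : ∀ s ∈ Set.Ioo (a + 2*τ) t, HasDerivAt w 0 s := by
      intro s hs
      have hzd : HasDerivAt z (lam * z s + eps * (z (s - 2*τ) - z (s - τ))) s := by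
        apply hd1 k s (by linarith [hs.1, e1]) (by linarith [hs.2, h2, e2])
      have hz2 : z (s - 2*τ) = Complex.exp (lam * ((s - 2*τ - a : ℝ) : ℂ)) * z a := by
        have h' := hA k (s - 2*τ) (by linarith [hs.1, ha, hτ])
          (by linarith [hs.2, h2, e1, ha, hτ])
        rw [← ha] at h'
        exact h'
      have hz1 : z (s - τ) = Complex.exp (lam * ((s - τ - a : ℝ) : ℂ)) * z a := by
        have h' := hA k (s - τ) (by linarith [hs.1, ha, hτ])
          (by linarith [hs.2, h2, e1, ha, hτ])
        rw [← ha] at h'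
        exact h'
      have hE : HasDerivAt (fun s : ℝ => Complex.exp (-(lam * ((s - a : ℝ) : ℂ))))
          (Complex.exp (-(lam * ((s - a : ℝ) : ℂ))) * (-lam)) s := by
        have h1' : HasDerivAt (fun s : ℝ => ((s - a : ℝ) : ℂ)) 1 s := by
          simpa using ((hasDerivAt_id s).sub_const a).ofReal_comp
        have := ((h1'.const_mul lam).neg).cexp
        simpa [mul_comm] using this
      have hlin : HasDerivAt (fun s : ℝ => eps * ((s - a - 2*τ : ℝ) : ℂ) * (C2 - C1) * z a)
          (eps * (C2 - C1) * z a) s := by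
        have h1' : HasDerivAt (fun s : ℝ => ((s - a - 2*τ : ℝ) : ℂ)) 1 s := by
          simpa [sub_sub] using ((hasDerivAt_id s).sub_const (a + 2*τ)).ofReal_comp
        have := ((h1'.const_mul eps).mul_const (C2 - C1)).mul_const (z a)
        simpa [mul_comm, mul_assoc, mul_one] using this
      have htot := (hE.mul hzd).sub hlin
      refine htot.congr_deriv (Eq.symm ?_)
      rw [hz2, hz1]
      have eC2 : Complex.exp (-(lam * ((s - a : ℝ) : ℂ))) *
          Complex.exp (lam * ((s - 2*τ - a : ℝ) : ℂ)) = C2 := by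
        rw [hC2, ← Complex.exp_add]
        congr 1
        push_cast
        ring
      have eC1 : Complex.exp (-(lam * ((s - a : ℝ) : ℂ))) *
          Complex.exp (lam * ((s - τ - a : ℝ) : ℂ)) = C1 := by
        rw [hC1, ← Complex.exp_add]
        congr 1
        push_cast
        ring
      linear_combination (- eps * z a) * eC2 + (eps * z a) * eC1
    have hwc : ContinuousOn w (Set.Icc (a + 2*τ) t) := by
      apply ContinuousOn.sub
      · apply ContinuousOn.mul
        · exact (Complex.continuous_exp.comp (by fun_prop)).continuousOn
        · exact hz.mono (fun x hx => le_trans (by linarith) hx.1)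
      · fun_prop
    have hw2 : w (a + 2*τ) = z a := by
      have hz2 : z (a + 2*τ) = Complex.exp (lam * ((2*τ : ℝ) : ℂ)) * z a := by
        have h' := hA k (a + 2*τ) (by linarith [ha, hτ]) (by linarith [e1, ha])
        rw [← ha] at h'
        rw [show (a + 2*τ - a : ℝ) = 2*τ by ring] at h'
        exact h'
      rw [hw]
      simp only
      rw [show (a + 2*τ - a : ℝ) = 2*τ by ring, show (2*τ - 2*τ : ℝ) = 0 by ring,
        hz2]
      simp only [Complex.ofReal_zero, mul_zero, zero_mul, sub_zero]
      rw [← mul_assoc, ← Complex.exp_add]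
      simp
    have hwt := constOn (by linarith : a + 2*τ ≤ t) hwc hwd
    rw [hw2] at hwt
    have hfin : Complex.exp (-(lam * ((t - a : ℝ) : ℂ))) * z t
        = z a + eps * ((t - a - 2*τ : ℝ) : ℂ) * (C2 - C1) * z a := by
      rw [hw] at hwt
      simp only at hwt
      linear_combination hwt
    rw [← hfin, ← mul_assoc, ← Complex.exp_add]
    simp
  -- one-period multiplier
  have hstep : ∀ k : ℕ, z (3*((k:ℝ)+1)*τ) = sig * z (3*(k:ℝ)*τ) := by
    intro k
    have h := hB k (3*((k:ℝ)+1)*τ) (by nlinarith) (by nlinarith)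
    rw [show (3*((k:ℝ)+1)*τ - 3*(k:ℝ)*τ : ℝ) = 3*τ by ring,
        show (3*τ - 2*τ : ℝ) = τ by ring] at h
    rw [h, hsig]
    have hEne : Complex.exp (lam*(τ:ℂ)) ≠ 0 := Complex.exp_ne_zero _
    have g1 : Complex.exp (lam * ((3*τ:ℝ):ℂ)) = Complex.exp (lam*(τ:ℂ))^3 := by
      rw [← Complex.exp_nat_mul]
      congr 1
      push_cast
      ring
    have g2 : Complex.exp (3*lam*(τ:ℂ)) = Complex.exp (lam*(τ:ℂ))^3 := by
      rw [← Complex.exp_nat_mul]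
      congr 1
      push_cast
      ring
    have g3 : Complex.exp (-(lam * ((2*τ:ℝ):ℂ))) = (Complex.exp (lam*(τ:ℂ))^2)⁻¹ := by
      rw [Complex.exp_neg]
      congr 1
      rw [← Complex.exp_nat_mul]
      congr 1
      push_cast
      ring
    have g4 : Complex.exp (-(lam * ((τ:ℝ):ℂ))) = (Complex.exp (lam*(τ:ℂ)))⁻¹ := by
      rw [Complex.exp_neg]
    rw [g1, g2, g3, g4]
    field_simp
    ring
  -- iteration
  have hiter : ∀ k : ℕ, z (3*(k:ℝ)*τ) = sig^k * z 0 := by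
    intro k
    induction k with
    | zero => simp
    | succ n ih =>
      have e : ((n+1:ℕ):ℝ) = (n:ℝ)+1 := by push_cast; ring
      rw [e, hstep n, ih, pow_succ]
      ring
  -- uniform bound over one period
  set C : ℝ := Real.exp (|lam.re| * (3*τ)) * (1 + ‖eps‖ * τ *
      ‖Complex.exp (-(lam * ((2*τ:ℝ):ℂ))) - Complex.exp (-(lam * ((τ:ℝ):ℂ)))‖) with hCdef
  have habs_exp : ∀ x : ℝ, 0 ≤ x → x ≤ 3*τ →
      ‖Complex.exp (lam * (x:ℂ))‖ ≤ Real.exp (|lam.re| * (3*τ)) := by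
    intro x hx0 hx3
    rw [Complex.norm_exp]
    apply Real.exp_le_exp.mpr
    have hre : (lam * (x:ℂ)).re = lam.re * x := by simp [Complex.mul_re]
    rw [hre]
    nlinarith [le_abs_self lam.re, abs_nonneg lam.re]
  have hCb : ∀ (k : ℕ) (t : ℝ), 3*(k:ℝ)*τ ≤ t → t ≤ 3*((k:ℝ)+1)*τ →
      ‖z t‖ ≤ C * ‖z (3*(k:ℝ)*τ)‖ := by
    intro k t h1 h2
    have hBpos : (0:ℝ) ≤ ‖eps‖ * τ *
        ‖Complex.exp (-(lam * ((2*τ:ℝ):ℂ))) - Complex.exp (-(lam * ((τ:ℝ):ℂ)))‖ := by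
      positivity
    have hza : (0:ℝ) ≤ ‖z (3*(k:ℝ)*τ)‖ := norm_nonneg _
    rcases le_or_gt t ((3*(k:ℝ)+2)*τ) with hcase | hcase
    · rw [hA k t h1 hcase, norm_mul]
      have h3 : ‖Complex.exp (lam * ((t - 3*(k:ℝ)*τ : ℝ):ℂ))‖
          ≤ Real.exp (|lam.re| * (3*τ)) := habs_exp _ (by linarith) (by nlinarith)
      have step1 := mul_le_mul_of_nonneg_right h3 hza
      have step2 : (0:ℝ) ≤ Real.exp (|lam.re| * (3*τ)) * (‖eps‖ * τ *
          ‖Complex.exp (-(lam * ((2*τ:ℝ):ℂ))) - Complex.exp (-(lam * ((τ:ℝ):ℂ)))‖)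
          * ‖z (3*(k:ℝ)*τ)‖ :=
        mul_nonneg (mul_nonneg (Real.exp_pos _).le hBpos) hza
      rw [hCdef]
      nlinarith [step1, step2]
    · have hBle : t ≤ (3*(k:ℝ)+3)*τ := by nlinarith
      rw [hB k t hcase.le hBle, norm_mul]
      have h3 : ‖Complex.exp (lam * ((t - 3*(k:ℝ)*τ : ℝ):ℂ))‖
          ≤ Real.exp (|lam.re| * (3*τ)) := habs_exp _ (by nlinarith) (by nlinarith)
      have h4 : ‖z (3*(k:ℝ)*τ) + eps * ((t - 3*(k:ℝ)*τ - 2*τ:ℝ):ℂ) *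
            (Complex.exp (-(lam * ((2*τ:ℝ):ℂ))) - Complex.exp (-(lam * ((τ:ℝ):ℂ)))) *
            z (3*(k:ℝ)*τ)‖
          ≤ (1 + ‖eps‖ * τ *
              ‖Complex.exp (-(lam * ((2*τ:ℝ):ℂ))) - Complex.exp (-(lam * ((τ:ℝ):ℂ)))‖)
            * ‖z (3*(k:ℝ)*τ)‖ := by
      
        refine le_trans (norm_add_le _ _) ?_
        rw [norm_mul, norm_mul, norm_mul, Complex.norm_real, Real.norm_eq_abs]
        have h5 : |t - 3*(k:ℝ)*τ - 2*τ| ≤ τ := by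
          rw [_root_.abs_of_nonneg (by nlinarith)]
          nlinarith
        have h6 := mul_le_mul_of_nonneg_left h5 (norm_nonneg eps)
        have h7 := mul_le_mul_of_nonneg_right h6
          (norm_nonneg (Complex.exp (-(lam * ((2*τ:ℝ):ℂ))) - Complex.exp (-(lam * ((τ:ℝ):ℂ)))))
        have h8 := mul_le_mul_of_nonneg_right h7 hza
        linarith [h8]
      have i1 := mul_le_mul_of_nonneg_right h3 (norm_nonneg
        (z (3*(k:ℝ)*τ) + eps * ((t - 3*(k:ℝ)*τ - 2*τ:ℝ):ℂ) *
          (Complex.exp (-(lam * ((2*τ:ℝ):ℂ))) - Complex.exp (-(lam * ((τ:ℝ):ℂ)))) *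
          z (3*(k:ℝ)*τ)))
      have i2 := mul_le_mul_of_nonneg_left h4 (Real.exp_pos (|lam.re| * (3*τ))).le
      rw [hCdef]
      nlinarith [i1, i2]
  -- conclusion
  have hC0 : 0 ≤ C := by
    rw [hCdef]
    positivity
  have hr0 : 0 ≤ ‖sig‖ := norm_nonneg _
  have hfloor : Filter.Tendsto (fun t : ℝ => ⌊t / (3*τ)⌋₊) Filter.atTop Filter.atTop :=
    tendsto_nat_floor_atTop.comp (Filter.Tendsto.atTop_div_const (by positivity) Filter.tendsto_id)
  have hgeo : Filter.Tendsto (fun t : ℝ => C * ‖z 0‖ * (‖sig‖) ^ (⌊t / (3*τ)⌋₊))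
      Filter.atTop (nhds 0) := by
    have := ((tendsto_pow_atTop_nhds_zero_of_lt_one hr0 hsig1).comp hfloor).const_mul
      (C * ‖z 0‖)
    simpa using this
  apply squeeze_zero_norm' ?_ hgeo
  filter_upwards [Filter.eventually_ge_atTop 0] with t ht
  have hk1 : 3*((⌊t / (3*τ)⌋₊:ℕ):ℝ)*τ ≤ t := by
    have h' := Nat.floor_le (by positivity : (0:ℝ) ≤ t / (3*τ))
    calc 3*((⌊t / (3*τ)⌋₊:ℕ):ℝ)*τ = ((⌊t / (3*τ)⌋₊:ℕ):ℝ) * (3*τ) := by ring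
    _ ≤ (t/(3*τ)) * (3*τ) := by nlinarith
    _ = t := by field_simp
  have hk2 : t ≤ 3*(((⌊t / (3*τ)⌋₊:ℕ):ℝ)+1)*τ := by
    have h' := Nat.lt_floor_add_one (t / (3*τ))
    have h3 : t/(3*τ) < ((⌊t / (3*τ)⌋₊:ℕ):ℝ)+1 := h'
    have h6 : 0 < 3*τ := by positivity
    have := (div_lt_iff₀ h6).mp h3
    nlinarith
  have hb := hCb _ t hk1 hk2
  rw [hiter, norm_mul, norm_pow] at hb
  calc ‖z t‖ = ‖z t‖ := rfl
  _ ≤ C * ((‖sig‖)^(⌊t / (3*τ)⌋₊) * ‖z 0‖) := hb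
  _ = C * ‖z 0‖ * (‖sig‖)^(⌊t / (3*τ)⌋₊) := by ring


lemma mulVec_blk_inl {m p : ℕ} (d : Fin m → ℝ) (M : Fin p → Matrix (Fin 2) (Fin 2) ℝ)
    (v : (Fin m ⊕ Fin p × Fin 2) → ℝ) (a : Fin m) :
    (Matrix.fromBlocks (Matrix.diagonal d) 0 0
      (fun (x y : Fin p × Fin 2) => if x.1 = y.1 then M x.1 x.2 y.2 else 0)).mulVec v (Sum.inl a)
      = d a * v (Sum.inl a) := by
  simp [Matrix.mulVec, dotProduct, Fintype.sum_sum_type, Matrix.diagonal_apply,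
    ite_mul, zero_mul, Finset.sum_ite_eq, Matrix.fromBlocks, Matrix.of_apply]

lemma mulVec_blk_inr {m p : ℕ} (d : Fin m → ℝ) (M : Fin p → Matrix (Fin 2) (Fin 2) ℝ)
    (v : (Fin m ⊕ Fin p × Fin 2) → ℝ) (j : Fin p) (i : Fin 2) :
    (Matrix.fromBlocks (Matrix.diagonal d) 0 0
      (fun (x y : Fin p × Fin 2) => if x.1 = y.1 then M x.1 x.2 y.2 else 0)).mulVec v (Sum.inr (j, i))
      = M j i 0 * v (Sum.inr (j, 0)) + M j i 1 * v (Sum.inr (j, 1)) := by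
  simp [Matrix.mulVec, dotProduct, Fintype.sum_sum_type, Fintype.sum_prod_type,
    ite_mul, zero_mul, Finset.sum_ite_eq, Matrix.fromBlocks, Matrix.of_apply, Fin.sum_univ_two]

lemma mulVec_blk_inl' {m p : ℕ} (d : Fin m → ℝ) (f g : Fin p → ℝ)
    (v : (Fin m ⊕ Fin p × Fin 2) → ℝ) (a : Fin m) :
    (Matrix.fromBlocks (Matrix.diagonal d) 0 0
      (fun (x y : Fin p × Fin 2) => if x.1 = y.1 then !![f x.1, -g x.1; g x.1, f x.1] x.2 y.2 else 0)).mulVec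
        v (Sum.inl a) = d a * v (Sum.inl a) :=
  mulVec_blk_inl d (fun q => !![f q, -g q; g q, f q]) v a

lemma mulVec_blk_inr0 {m p : ℕ} (d : Fin m → ℝ) (f g : Fin p → ℝ)
    (v : (Fin m ⊕ Fin p × Fin 2) → ℝ) (j : Fin p) :
    (Matrix.fromBlocks (Matrix.diagonal d) 0 0
      (fun (x y : Fin p × Fin 2) => if x.1 = y.1 then !![f x.1, -g x.1; g x.1, f x.1] x.2 y.2 else 0)).mulVec
        v (Sum.inr (j, 0)) = f j * v (Sum.inr (j, 0)) - g j * v (Sum.inr (j, 1)) := by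
  have := mulVec_blk_inr d (fun q => !![f q, -g q; g q, f q]) v j 0
  simpa [Matrix.cons_val_zero, Matrix.cons_val_one, Matrix.head_cons, sub_eq_add_neg,
    neg_mul] using this

lemma mulVec_blk_inr1 {m p : ℕ} (d : Fin m → ℝ) (f g : Fin p → ℝ)
    (v : (Fin m ⊕ Fin p × Fin 2) → ℝ) (j : Fin p) :
    (Matrix.fromBlocks (Matrix.diagonal d) 0 0
      (fun (x y : Fin p × Fin 2) => if x.1 = y.1 then !![f x.1, -g x.1; g x.1, f x.1] x.2 y.2 else 0)).mulVec
        v (Sum.inr (j, 1)) = g j * v (Sum.inr (j, 0)) + f j * v (Sum.inr (j, 1)) := by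
  have := mulVec_blk_inr d (fun q => !![f q, -g q; g q, f q]) v j 1
  simpa [Matrix.cons_val_zero, Matrix.cons_val_one, Matrix.head_cons] using this

/-- n-dimensional stabilization theorem: the real Jordan form is block diagonal with
nonzero real 1×1 blocks (indexed by `Fin m`) and 2×2 rotation-scaling blocks with
nonzero real part (indexed by `Fin p × Fin 2`), and the TDFC with act-and-wait
periodic gain stabilizes the origin. -/
theorem stmt10 (m p : ℕ) (τ : ℝ) (hτ : 0 < τ)
    (lam : Fin m → ℝ) (hlam : ∀ i, lam i ≠ 0)
    (μ ω : Fin p → ℝ) (hμ : ∀ j, μ j ≠ 0)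
    (ζ : Fin m → ℝ) (hζ : ∀ i, 0 < lam i → |ζ i| < 1)
    (epsR : Fin m → ℝ)
    (hepsRneg : ∀ i, lam i < 0 → epsR i = 0)
    (hepsRpos : ∀ i, 0 < lam i →
      epsR i = Real.exp (-(lam i*τ)) * (Real.exp (3*lam i*τ) - ζ i) /
        (τ*(Real.exp (lam i*τ) - 1)))
    (ρ θ : Fin p → ℝ) (hρ : ∀ j, 0 ≤ ρ j ∧ ρ j < 1)
    (e1 e2 : Fin p → ℝ)
    (hEneg : ∀ j, μ j < 0 → e1 j = 0 ∧ e2 j = 0)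
    (hEpos : ∀ j, 0 < μ j →
      (e1 j : ℂ) + (e2 j : ℂ)*Complex.I =
        Complex.exp (-(((μ j : ℂ) + (ω j : ℂ)*Complex.I)*(τ:ℂ))) *
          (Complex.exp (3*((μ j : ℂ) + (ω j : ℂ)*Complex.I)*(τ:ℂ))
            - (ρ j : ℂ)*Complex.exp ((θ j : ℂ)*Complex.I)) /
          ((τ:ℂ)*(Complex.exp (((μ j : ℂ) + (ω j : ℂ)*Complex.I)*(τ:ℂ)) - 1)))
    (D Kt : Matrix (Fin m ⊕ Fin p × Fin 2) (Fin m ⊕ Fin p × Fin 2) ℝ)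
    (hD : D = Matrix.fromBlocks (Matrix.diagonal lam) 0 0
      (fun a b => if a.1 = b.1 then !![μ a.1, -ω a.1; ω a.1, μ a.1] a.2 b.2 else 0))
    (hKt : Kt = Matrix.fromBlocks (Matrix.diagonal epsR) 0 0
      (fun a b => if a.1 = b.1 then !![e1 a.1, -e2 a.1; e2 a.1, e1 a.1] a.2 b.2 else 0))
    (Kfun : ℝ → Matrix (Fin m ⊕ Fin p × Fin 2) (Fin m ⊕ Fin p × Fin 2) ℝ)
    (hK0 : ∀ (k : ℕ) (t : ℝ), 3*(k:ℝ)*τ ≤ t → t < (3*(k:ℝ)+2)*τ → Kfun t = 0)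
    (hK1 : ∀ (k : ℕ) (t : ℝ), (3*(k:ℝ)+2)*τ ≤ t → t < (3*(k:ℝ)+3)*τ → Kfun t = Kt)
    (y : ℝ → (Fin m ⊕ Fin p × Fin 2) → ℝ) (hy : ContinuousOn y (Set.Ici 0))
    (hode : ∀ t : ℝ, 0 < t →
      HasDerivAt y (D.mulVec (y t) + (Kfun t).mulVec (y (t - 2*τ) - y (t - τ))) t) :
    Filter.Tendsto y Filter.atTop (nhds 0) := by
  subst hD hKt
  have hcomp := fun (t : ℝ) (ht : 0 < t) => hasDerivAt_pi.mp (hode t ht)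
  -- scalar blocks
  have hscalar : ∀ a : Fin m, Filter.Tendsto (fun t => y t (Sum.inl a)) Filter.atTop (nhds 0) := by
    intro a
    obtain ⟨sig, hsig, hsig1⟩ : ∃ sig : ℂ, (sig = Complex.exp (3*(lam a : ℂ)*(τ:ℂ)) -
        (epsR a : ℂ)*(τ:ℂ)*Complex.exp ((lam a : ℂ)*(τ:ℂ))*(Complex.exp ((lam a : ℂ)*(τ:ℂ)) - 1)
        ∧ ‖sig‖ < 1) := by
      rcases lt_or_gt_of_ne (hlam a) with hneg | hpos
      · refine ⟨Complex.exp (3*(lam a : ℂ)*(τ:ℂ)), by rw [hepsRneg a hneg]; push_cast; ring, ?_⟩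
        rw [show (3*(lam a : ℂ)*(τ:ℂ)) = ((3*lam a*τ : ℝ):ℂ) by push_cast; ring,
          Complex.norm_exp]
        simp only [Complex.ofReal_re]
        exact Real.exp_lt_one_iff.mpr (by nlinarith)
      · refine ⟨((ζ a : ℝ) : ℂ), ?_, by rw [Complex.norm_real, Real.norm_eq_abs]; exact hζ a hpos⟩
        have hgt : 1 < Real.exp (lam a*τ) := Real.one_lt_exp_iff.mpr (mul_pos hpos hτ)
        have hRne : Real.exp (lam a*τ) - 1 ≠ 0 := sub_ne_zero.mpr hgt.ne'
        have hR : (ζ a : ℝ) = Real.exp (3*lam a*τ) - epsR a * τ * Real.exp (lam a*τ) *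
            (Real.exp (lam a*τ) - 1) := by
          rw [hepsRpos a hpos,
            show Real.exp (3*lam a*τ) = Real.exp (lam a*τ)^3 from by
              rw [← Real.exp_nat_mul]; congr 1; push_cast; ring,
            Real.exp_neg]
          field_simp
          ring
        rw [hR]
        push_cast [Complex.ofReal_exp]
        ring
    have hcont : ContinuousOn (fun t => ((y t (Sum.inl a) : ℝ) : ℂ)) (Set.Ici 0) :=
      Complex.continuous_ofReal.comp_continuousOn
        ((continuous_apply (Sum.inl a)).comp_continuousOn hy)
    have hd0 : ∀ (k : ℕ) (t : ℝ), 3*(k:ℝ)*τ < t → t < (3*(k:ℝ)+2)*τ →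
        HasDerivAt (fun t => ((y t (Sum.inl a) : ℝ) : ℂ))
          ((lam a : ℂ) * ((y t (Sum.inl a) : ℝ) : ℂ)) t := by
      intro k t h1 h2
      have ht : 0 < t := lt_of_le_of_lt (mul_nonneg (by positivity) hτ.le) h1
      have hder := hcomp t ht (Sum.inl a)
      rw [hK0 k t h1.le h2] at hder
      simp only [Pi.add_apply, Matrix.zero_mulVec, Pi.zero_apply, add_zero,
        mulVec_blk_inl'] at hder
      have h' := hder.ofReal_comp
      convert h' using 1
      push_cast
      ring
    have hd1 : ∀ (k : ℕ) (t : ℝ), (3*(k:ℝ)+2)*τ < t → t < (3*(k:ℝ)+3)*τ →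
        HasDerivAt (fun t => ((y t (Sum.inl a) : ℝ) : ℂ))
          ((lam a : ℂ) * ((y t (Sum.inl a) : ℝ) : ℂ) + (epsR a : ℂ) *
            (((y (t-2*τ) (Sum.inl a) : ℝ) : ℂ) - ((y (t-τ) (Sum.inl a) : ℝ) : ℂ))) t := by
      intro k t h1 h2
      have ht : 0 < t := lt_trans (mul_pos (by positivity) hτ) h1
      have hder := hcomp t ht (Sum.inl a)
      rw [hK1 k t h1.le h2] at hder
      simp only [Pi.add_apply, Pi.sub_apply, mulVec_blk_inl'] at hder
      have h' := hder.ofReal_comp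
      convert h' using 1
      push_cast
      ring
    have hzt := keyLemma τ hτ (lam a : ℂ) (epsR a : ℂ) sig hsig hsig1 _ hcont hd0 hd1
    have h' := (Complex.continuous_re.tendsto 0).comp hzt
    simpa [Function.comp_def] using h'
  -- 2x2 blocks
  have hpair : ∀ j : Fin p, Filter.Tendsto
      (fun t => ((y t (Sum.inr (j,0)) : ℝ) : ℂ) + ((y t (Sum.inr (j,1)) : ℝ) : ℂ) * Complex.I)
      Filter.atTop (nhds 0) := by
    intro j
    set lc : ℂ := (μ j : ℂ) + (ω j : ℂ)*Complex.I with hlc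
    set ec : ℂ := (e1 j : ℂ) + (e2 j : ℂ)*Complex.I with hec
    obtain ⟨sig, hsig, hsig1⟩ : ∃ sig : ℂ, (sig = Complex.exp (3*lc*(τ:ℂ)) -
        ec*(τ:ℂ)*Complex.exp (lc*(τ:ℂ))*(Complex.exp (lc*(τ:ℂ)) - 1)
        ∧ ‖sig‖ < 1) := by
      rcases lt_or_gt_of_ne (hμ j) with hneg | hpos
      · refine ⟨Complex.exp (3*lc*(τ:ℂ)), ?_, ?_⟩
        · rw [hec, (hEneg j hneg).1, (hEneg j hneg).2]
          push_cast
          ring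
        · rw [Complex.norm_exp]
          have hre : (3*lc*(τ:ℂ)).re = 3*μ j*τ := by
            rw [hlc]
            simp [Complex.mul_re, Complex.add_re, Complex.add_im, Complex.mul_im]
          rw [hre]
          exact Real.exp_lt_one_iff.mpr (by nlinarith)
      · have hEabs : ‖Complex.exp (lc*(τ:ℂ))‖ = Real.exp (μ j*τ) := by
          rw [Complex.norm_exp]
          congr 1
          rw [hlc]
          simp [Complex.mul_re, Complex.add_re, Complex.add_im, Complex.mul_im]
        have hEne1 : Complex.exp (lc*(τ:ℂ)) - 1 ≠ 0 := by
          intro h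
          have h1 : Complex.exp (lc*(τ:ℂ)) = 1 := by linear_combination h
          rw [h1] at hEabs
          simp at hEabs
          have h2 : 1 < Real.exp (μ j*τ) := Real.one_lt_exp_iff.mpr (mul_pos hpos hτ)
          rw [← hEabs] at h2
          exact lt_irrefl _ h2
        have hτne : ((τ:ℝ):ℂ) ≠ 0 := Complex.ofReal_ne_zero.mpr hτ.ne'
        refine ⟨(ρ j : ℂ) * Complex.exp ((θ j : ℂ)*Complex.I), ?_, ?_⟩
        · have heq := hEpos j hpos
          rw [← hec, ← hlc] at heq
          rw [heq]
          rw [show Complex.exp (3*lc*(τ:ℂ)) = Complex.exp (lc*(τ:ℂ))^3 from by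
              rw [← Complex.exp_nat_mul]; congr 1; push_cast; ring,
            Complex.exp_neg]
          field_simp
          ring
        · rw [norm_mul, Complex.norm_real, Real.norm_eq_abs, Complex.norm_exp, _root_.abs_of_nonneg (hρ j).1]
          have hre : ((θ j : ℂ)*Complex.I).re = 0 := by simp
          rw [hre, Real.exp_zero, mul_one]
          exact (hρ j).2
    have hcont : ContinuousOn (fun t => ((y t (Sum.inr (j,0)) : ℝ) : ℂ)
        + ((y t (Sum.inr (j,1)) : ℝ) : ℂ) * Complex.I) (Set.Ici 0) := by
      apply ContinuousOn.add
      · exact Complex.continuous_ofReal.comp_continuousOn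
          ((continuous_apply (Sum.inr (j,0))).comp_continuousOn hy)
      · exact (Complex.continuous_ofReal.comp_continuousOn
          ((continuous_apply (Sum.inr (j,1))).comp_continuousOn hy)).mul continuousOn_const
    have hd0 : ∀ (k : ℕ) (t : ℝ), 3*(k:ℝ)*τ < t → t < (3*(k:ℝ)+2)*τ →
        HasDerivAt (fun t => ((y t (Sum.inr (j,0)) : ℝ) : ℂ)
            + ((y t (Sum.inr (j,1)) : ℝ) : ℂ) * Complex.I)
          (lc * (((y t (Sum.inr (j,0)) : ℝ) : ℂ)
            + ((y t (Sum.inr (j,1)) : ℝ) : ℂ) * Complex.I)) t := by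
      intro k t h1 h2
      have ht : 0 < t := lt_of_le_of_lt (mul_nonneg (by positivity) hτ.le) h1
      have hder0 := hcomp t ht (Sum.inr (j,0))
      have hder1 := hcomp t ht (Sum.inr (j,1))
      rw [hK0 k t h1.le h2] at hder0 hder1
      simp only [Pi.add_apply, Matrix.zero_mulVec, Pi.zero_apply, add_zero,
        mulVec_blk_inr0, mulVec_blk_inr1] at hder0 hder1
      have h' := hder0.ofReal_comp.add (hder1.ofReal_comp.mul_const Complex.I)
      refine h'.congr_deriv (Eq.symm ?_)
      rw [hlc]
      push_cast
      linear_combination ((ω j : ℂ) * ((y t (Sum.inr (j,1)) : ℝ) : ℂ)) * Complex.I_sq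
    have hd1 : ∀ (k : ℕ) (t : ℝ), (3*(k:ℝ)+2)*τ < t → t < (3*(k:ℝ)+3)*τ →
        HasDerivAt (fun t => ((y t (Sum.inr (j,0)) : ℝ) : ℂ)
            + ((y t (Sum.inr (j,1)) : ℝ) : ℂ) * Complex.I)
          (lc * (((y t (Sum.inr (j,0)) : ℝ) : ℂ)
            + ((y t (Sum.inr (j,1)) : ℝ) : ℂ) * Complex.I)
           + ec * ((((y (t-2*τ) (Sum.inr (j,0)) : ℝ) : ℂ)
              + ((y (t-2*τ) (Sum.inr (j,1)) : ℝ) : ℂ) * Complex.I)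
            - (((y (t-τ) (Sum.inr (j,0)) : ℝ) : ℂ)
              + ((y (t-τ) (Sum.inr (j,1)) : ℝ) : ℂ) * Complex.I))) t := by
      intro k t h1 h2
      have ht : 0 < t := lt_trans (mul_pos (by positivity) hτ) h1
      have hder0 := hcomp t ht (Sum.inr (j,0))
      have hder1 := hcomp t ht (Sum.inr (j,1))
      rw [hK1 k t h1.le h2] at hder0 hder1
      simp only [Pi.add_apply, Pi.sub_apply, mulVec_blk_inr0, mulVec_blk_inr1] at hder0 hder1
      have h' := hder0.ofReal_comp.add (hder1.ofReal_comp.mul_const Complex.I)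
      refine h'.congr_deriv (Eq.symm ?_)
      rw [hlc, hec]
      push_cast
      linear_combination ((ω j : ℂ) * ((y t (Sum.inr (j,1)) : ℝ) : ℂ)
        + (e2 j : ℂ) * (((y (t-2*τ) (Sum.inr (j,1)) : ℝ) : ℂ)
          - ((y (t-τ) (Sum.inr (j,1)) : ℝ) : ℂ))) * Complex.I_sq
    exact keyLemma τ hτ lc ec sig hsig hsig1 _ hcont hd0 hd1
  rw [tendsto_pi_nhds]
  intro idx
  rcases idx with a | ⟨j, i2⟩
  · simpa using hscalar a
  · have h := hpair j
    fin_cases i2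
    · have h' := (Complex.continuous_re.tendsto 0).comp h
      simpa [Function.comp_def] using h'
    · have h' := (Complex.continuous_im.tendsto 0).comp h
      simpa [Function.comp_def] using h'
end
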